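/- arXiv:1802.02370 — 12 statements merged into one kernel-verified Lean document; each statement's English description precedes it below -/
import Mathlib

section
/- Let X be a Delone set in ℝ^d with parameters (r,R). Then for any two points x, x' ∈ X there exist m ∈ ℕ with m ≤ ((2R)⁻¹ + r⁻¹)·‖x − x'‖ and a chain of points x = x₀, x₁, …, x_m = x' all belonging to X such that ‖x_i − x_{i−1}‖ ≤ 4R for every i = 1, …, m. -/
/-!
Cut the segment from `x` to `x'` into `m = ⌈‖x - x'‖ / 2R⌉` pieces of length at most `2R` and
replace each division point by a point of `X` at distance at most `R` (the endpoints by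
themselves); consecutive points are then at most `R + 2R + R` apart. Since `x ≠ x'` forces
`‖x - x'‖ ≥ 2r`, the `+ 1` lost in rounding up is absorbed by `‖x - x'‖ / r`.
-/

noncomputable section

/-- `X` is uniformly discrete with parameter `r`: distinct points are at distance `≥ 2r`. -/
def UnifDiscrete {d : ℕ} (X : Set (EuclideanSpace ℝ (Fin d))) (r : ℝ) : Prop :=
  ∀ x ∈ X, ∀ y ∈ X, x ≠ y → 2 * r ≤ dist x y

/-- `X` is relatively dense with parameter `R`: every closed ball of radius `R` meets `X`. -/
def RelDense {d : ℕ} (X : Set (EuclideanSpace ℝ (Fin d))) (R : ℝ) : Prop :=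
  ∀ z : EuclideanSpace ℝ (Fin d), ∃ x ∈ X, dist z x ≤ R

theorem exists_retraction_of_forall_exists_dist_le {P : Type*} [PseudoMetricSpace P]
    {X : Set P} {R : ℝ} (hX : ∀ z, ∃ y ∈ X, dist z y ≤ R) :
    ∃ g : P → P, (∀ z, g z ∈ X) ∧ (∀ z, dist z (g z) ≤ R) ∧ ∀ x ∈ X, g x = x := by
  classical
  choose f hfX hfd using hX
  refine ⟨fun z => if z ∈ X then z else f z, fun z => ?_, fun z => ?_, fun x hx => if_pos hx⟩
  · by_cases hz : z ∈ X <;> simp [hz, hfX]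
  · by_cases hz : z ∈ X <;> simp [hz, hfd, dist_nonneg.trans (hfd z)]

theorem dist_lineMap_div_natCast_succ_le {V P : Type*} [SeminormedAddCommGroup V]
    [NormedSpace ℝ V] [PseudoMetricSpace P] [NormedAddTorsor V P] {x x' : P} {n : ℕ} {s : ℝ}
    (hs : 0 ≤ s) (h : dist x x' ≤ n * s) (i : ℕ) :
    dist (AffineMap.lineMap x x' (((i + 1 : ℕ) : ℝ) / n))
      (AffineMap.lineMap x x' ((i : ℝ) / n)) ≤ s := by
  rw [dist_lineMap_lineMap, Nat.cast_succ, add_div, Real.dist_eq, add_sub_cancel_left,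
    abs_of_nonneg (by positivity)]
  rcases n.eq_zero_or_pos with rfl | hn
  · simpa using hs
  · rw [div_mul_eq_mul_div, one_mul, div_le_iff₀ (by positivity), mul_comm]
    exact h

theorem exists_chain_of_forall_exists_dist_le {V P : Type*} [SeminormedAddCommGroup V]
    [NormedSpace ℝ V] [MetricSpace P] [NormedAddTorsor V P] {X : Set P} {R s : ℝ}
    (hX : ∀ z, ∃ y ∈ X, dist z y ≤ R) {x x' : P} (hx : x ∈ X) (hx' : x' ∈ X) {n : ℕ}
    (hs : 0 ≤ s) (h : dist x x' ≤ n * s) :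
    ∃ c : ℕ → P, c 0 = x ∧ c n = x' ∧ (∀ i, c i ∈ X) ∧
      ∀ i, dist (c (i + 1)) (c i) ≤ s + 2 * R := by
  obtain ⟨g, hgX, hgd, hgx⟩ := exists_retraction_of_forall_exists_dist_le hX
  set z : ℕ → P := fun i => AffineMap.lineMap x x' ((i : ℝ) / n)
  refine ⟨fun i => g (z i), by simp [z, hgx x hx], ?_, fun i => hgX _, fun i => ?_⟩
  · rcases n.eq_zero_or_pos with rfl | hn
    · obtain rfl : x = x' := dist_le_zero.1 (by simpa using h)
      simp [z, hgx x hx]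
    · simp [z, hn.ne', hgx x' hx']
  · calc dist (g (z (i + 1))) (g (z i))
        ≤ dist (g (z (i + 1))) (z (i + 1)) + dist (z (i + 1)) (z i) + dist (z i) (g (z i)) :=
          dist_triangle4 _ _ _ _
      _ ≤ R + s + R := by
          gcongr
          exacts [dist_comm (z (i + 1)) _ ▸ hgd _, dist_lineMap_div_natCast_succ_le hs h i, hgd _]
      _ = s + 2 * R := by ring

theorem natCeil_div_two_mul_le {r R L : ℝ} (hr : 0 < r) (hR : 0 < R) (hL : 2 * r ≤ L) :
    (⌈L / (2 * R)⌉₊ : ℝ) ≤ ((2 * R)⁻¹ + r⁻¹) * L := by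
  have hceil : (⌈L / (2 * R)⌉₊ : ℝ) < L / (2 * R) + 1 := Nat.ceil_lt_add_one (div_nonneg (by linarith) (by positivity))
  have hone : 1 ≤ r⁻¹ * L := by
    rw [le_inv_mul_iff₀ hr, mul_one]
    linarith
  rw [add_mul, ← div_eq_inv_mul]
  linarith

/-- For a Delone set with parameters `(r,R)`, any two points `x, x' ∈ X` can be joined by a
chain of points of `X` with steps of length at most `4R`, whose number of steps `m` is at most
`((2R)⁻¹ + r⁻¹)·‖x − x'‖`. -/
theorem delone_chain {d : ℕ} (X : Set (EuclideanSpace ℝ (Fin d))) (r R : ℝ)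
    (hr : 0 < r) (hR : 0 < R) (hud : UnifDiscrete X r) (hrd : RelDense X R) :
    ∀ x ∈ X, ∀ x' ∈ X, ∃ (m : ℕ) (c : ℕ → EuclideanSpace ℝ (Fin d)),
      (m : ℝ) ≤ ((2 * R)⁻¹ + r⁻¹) * ‖x - x'‖ ∧
      c 0 = x ∧ c m = x' ∧ (∀ i ≤ m, c i ∈ X) ∧
      (∀ i, 1 ≤ i → i ≤ m → ‖c i - c (i - 1)‖ ≤ 4 * R) := by
  intro x hx x' hx'
  have hm : dist x x' ≤ ⌈dist x x' / (2 * R)⌉₊ * (2 * R) :=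
    (div_le_iff₀ (by positivity)).1 (Nat.le_ceil _)
  obtain ⟨c, hc0, hcm, hcX, hstep⟩ :=
    exists_chain_of_forall_exists_dist_le hrd hx hx' (by positivity) hm
  refine ⟨_, c, ?_, hc0, hcm, fun i _ => hcX i, fun i hi _ => ?_⟩
  · rw [← dist_eq_norm]
    rcases eq_or_ne x x' with rfl | hne
    · simp
    · exact natCeil_div_two_mul_le hr hR (hud x hx x' hx' hne)
  · obtain ⟨j, rfl⟩ := Nat.exists_eq_add_of_le' hi
    rw [← dist_eq_norm, Nat.add_sub_cancel]
    linarith [hstep j]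
end
end

section
/- Let X be a Delone set in ℝ^d of finite type. Then the additive subgroup [X] of ℝ^d generated by X is a finitely generated (hence free) group, and for every free ℤ-basis v₁,…,v_s of [X], the associated address map φ : [X] → ℤ^s is globally Lipschitz on X: there is a constant C₀ > 0 such that ‖φ(x) − φ(x')‖ ≤ C₀‖x − x'‖ for all x, x' ∈ X. -/
open scoped Pointwise

noncomputable section

/-- `X` is a Delone set. -/
def IsDelone {d : ℕ} (X : Set (EuclideanSpace ℝ (Fin d))) : Prop :=
  (∃ r > 0, UnifDiscrete X r) ∧ (∃ R > 0, RelDense X R)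

/-- The address map associated to a free `ℤ`-basis of the subgroup `[X]` generated by `X`:
it sends `Σᵢ nᵢ vᵢ` to the coordinate vector `(n₁,…,n_s)`, viewed in `ℝ^s`. -/
def address {d s : ℕ} {X : Set (EuclideanSpace ℝ (Fin d))}
    (b : Module.Basis (Fin s) ℤ (AddSubgroup.closure X)) (x : AddSubgroup.closure X) :
    EuclideanSpace ℝ (Fin s) := WithLp.toLp 2 (fun i => (b.repr x i : ℝ))

/-! Relative density with radius `R` lets one walk from any `x'` to any `x` in `X` by about
`‖x - x'‖` steps of length `< 2R + 2`, obtained by rounding the equally spaced points of the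
segment `[x', x]` to nearby points of `X`. Every step lies in the finite set
`F = (X - X) ∩ B(0, 2R + 2)`, so `X` lies in the group generated by `F` and one point of `X`, and
an additive map `φ` on `[X]` satisfies `‖φ x - φ x'‖ ≤ M (‖x - x'‖ + 2)` with `M = max ‖φ‖` on `F`.
Uniform discreteness turns this coarse bound into a Lipschitz bound. -/

open Metric

section Chain

variable {E : Type*} [NormedAddCommGroup E] [NormedSpace ℝ E] {X : Set E} {R : ℝ}

theorem exists_chain_of_forall_exists_dist_le_s2 (hR : ∀ z, ∃ x ∈ X, dist z x ≤ R)
    {x x' : E} (hx : x ∈ X) (hx' : x' ∈ X) :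
    ∃ (N : ℕ) (y : ℕ → E), (N : ℝ) ≤ ‖x - x'‖ + 2 ∧ (∀ k, y k ∈ X) ∧ y 0 = x' ∧ y N = x ∧
      ∀ k < N, dist (y (k + 1)) (y k) < 2 * R + 2 := by
  classical
  choose g hgX hg using hR
  set N : ℕ := ⌈‖x - x'‖⌉₊ + 1
  have hN : (0 : ℝ) < N := by positivity
  set w : E := (N : ℝ)⁻¹ • (x - x')
  have hw : ‖w‖ ≤ 1 := by
    rw [norm_smul, norm_inv, Real.norm_natCast, inv_mul_le_iff₀ hN, mul_one]
    exact (Nat.le_ceil _).trans (by simp [N])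
  set z : ℕ → E := fun k => x' + (k : ℝ) • w
  have hz0 : z 0 = x' := by simp [z]
  have hzN : z N = x := by simp [z, w, smul_smul, hN.ne']
  -- Points of the segment already in `X` are kept, so that the chain starts at `x'` and ends at `x`.
  set y : ℕ → E := fun k => if z k ∈ X then z k else g (z k)
  have hyX k : y k ∈ X := by
    by_cases h : z k ∈ X <;> simp [y, h, hgX]
  have hyz k : dist (y k) (z k) ≤ R := by
    by_cases h : z k ∈ X
    · simpa [y, h] using dist_nonneg.trans (hg (z k))
    · simpa [y, h, dist_comm] using hg (z k)
  have hy_of_mem {k} (h : z k ∈ X) : y k = z k := if_pos h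
  refine ⟨N, y, ?_, hyX, ?_, ?_, fun k _ => ?_⟩
  · have := Nat.ceil_lt_add_one (norm_nonneg (x - x'))
    push_cast [N]
    linarith
  · rw [hy_of_mem (hz0 ▸ hx'), hz0]
  · rw [hy_of_mem (hzN ▸ hx), hzN]
  · have hzz : dist (z (k + 1)) (z k) ≤ 1 := by
      simpa [z, dist_eq_norm, add_smul] using hw
    calc dist (y (k + 1)) (y k)
        ≤ dist (y (k + 1)) (z (k + 1)) + dist (z (k + 1)) (z k) + dist (z k) (y k) :=
          dist_triangle4 _ _ _ _
      _ ≤ R + 1 + R := by gcongr <;> simp only [hyz, dist_comm (z k)]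
      _ < 2 * R + 2 := by linarith

theorem AddSubgroup.closure_eq_closure_insert_sub_inter_ball
    (hR : ∀ z, ∃ x ∈ X, dist z x ≤ R) {x₀ : E} (hx₀ : x₀ ∈ X) :
    AddSubgroup.closure X = AddSubgroup.closure (insert x₀ ((X - X) ∩ ball 0 (2 * R + 2))) := by
  refine le_antisymm ((AddSubgroup.closure_le _).2 fun x hx => ?_) ((AddSubgroup.closure_le _).2 ?_)
  · obtain ⟨N, y, -, hyX, hy0, hyN, hstep⟩ := exists_chain_of_forall_exists_dist_le_s2 hR hx hx₀
    have hx_eq : x = x₀ + ∑ k ∈ Finset.range N, (y (k + 1) - y k) := by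
      rw [Finset.sum_range_sub, hy0, hyN, add_sub_cancel]
    rw [SetLike.mem_coe, hx_eq]
    refine add_mem (AddSubgroup.subset_closure (Set.mem_insert _ _))
      (sum_mem fun k hk => AddSubgroup.subset_closure (Set.mem_insert_of_mem _ ⟨?_, ?_⟩))
    · exact Set.sub_mem_sub (hyX _) (hyX _)
    · simpa [dist_eq_norm] using hstep k (Finset.mem_range.1 hk)
  · rintro w (rfl | ⟨⟨a, ha, b, hb, rfl⟩, -⟩)
    · exact AddSubgroup.subset_closure hx₀
    · exact sub_mem (AddSubgroup.subset_closure ha) (AddSubgroup.subset_closure hb)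

theorem AddSubgroup.fg_closure_of_forall_exists_dist_le (hR : ∀ z, ∃ x ∈ X, dist z x ≤ R)
    (hfin : ((X - X) ∩ ball 0 (2 * R + 2)).Finite) : (AddSubgroup.closure X).FG := by
  obtain ⟨x₀, hx₀, -⟩ := hR 0
  rw [AddSubgroup.fg_iff]
  exact ⟨_, (AddSubgroup.closure_eq_closure_insert_sub_inter_ball hR hx₀).symm,
    hfin.insert x₀⟩

end Chain

section AddMonoidHom

variable {E F : Type*} [SeminormedAddCommGroup E] [SeminormedAddCommGroup F] {X : Set E}

theorem exists_norm_map_sub_le_of_dist_lt {T : ℝ} (hfin : ((X - X) ∩ ball 0 T).Finite)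
    (φ : AddSubgroup.closure X →+ F) :
    ∃ M, ∀ a (ha : a ∈ X) b (hb : b ∈ X), dist a b < T →
      ‖φ ⟨a, AddSubgroup.subset_closure ha⟩ - φ ⟨b, AddSubgroup.subset_closure hb⟩‖ ≤ M := by
  have hS : (Subtype.val ⁻¹' ((X - X) ∩ ball 0 T) : Set (AddSubgroup.closure X)).Finite :=
    hfin.preimage Subtype.val_injective.injOn
  obtain ⟨M, hM⟩ := (hS.image fun w => ‖φ w‖).bddAbove
  refine ⟨M, fun a ha b hb hab => ?_⟩
  rw [← map_sub]
  refine hM ⟨_, ⟨Set.sub_mem_sub ha hb, ?_⟩, rfl⟩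
  simpa [dist_eq_norm] using hab

end AddMonoidHom

section Lipschitz

variable {E F : Type*} [NormedAddCommGroup E] [NormedSpace ℝ E] [SeminormedAddCommGroup F]
  {X : Set E} {R : ℝ}

theorem exists_norm_map_sub_le_mul_add_two (hR : ∀ z, ∃ x ∈ X, dist z x ≤ R)
    (hfin : ((X - X) ∩ ball 0 (2 * R + 2)).Finite) (φ : AddSubgroup.closure X →+ F) :
    ∃ M ≥ 0, ∀ x (hx : x ∈ X) x' (hx' : x' ∈ X),
      ‖φ ⟨x, AddSubgroup.subset_closure hx⟩ - φ ⟨x', AddSubgroup.subset_closure hx'⟩‖ ≤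
        M * (‖x - x'‖ + 2) := by
  obtain ⟨M, hM⟩ := exists_norm_map_sub_le_of_dist_lt hfin φ
  refine ⟨max M 0, le_max_right _ _, fun x hx x' hx' => ?_⟩
  obtain ⟨N, y, hN, hyX, hy0, hyN, hstep⟩ := exists_chain_of_forall_exists_dist_le_s2 hR hx hx'
  set ψ : ℕ → F := fun k => φ ⟨y k, AddSubgroup.subset_closure (hyX k)⟩
  have hψ : ψ N - ψ 0 =
      φ ⟨x, AddSubgroup.subset_closure hx⟩ - φ ⟨x', AddSubgroup.subset_closure hx'⟩ := by
    simp only [ψ, hy0, hyN]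
  calc ‖φ ⟨x, _⟩ - φ ⟨x', _⟩‖ = ‖∑ k ∈ Finset.range N, (ψ (k + 1) - ψ k)‖ := by
        rw [Finset.sum_range_sub, hψ]
    _ ≤ ∑ _k ∈ Finset.range N, max M 0 := norm_sum_le_of_le _ fun k hk =>
        (hM _ (hyX _) _ (hyX _) (hstep k (Finset.mem_range.1 hk))).trans (le_max_left _ _)
    _ = N * max M 0 := by simp
    _ ≤ max M 0 * (‖x - x'‖ + 2) := by
        rw [mul_comm]
        gcongr

theorem exists_norm_map_sub_le_mul_norm_sub {δ : ℝ} (hδ : 0 < δ)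
    (hdisc : ∀ x ∈ X, ∀ y ∈ X, x ≠ y → δ ≤ dist x y) (hR : ∀ z, ∃ x ∈ X, dist z x ≤ R)
    (hfin : ((X - X) ∩ ball 0 (2 * R + 2)).Finite) (φ : AddSubgroup.closure X →+ F) :
    ∃ C > 0, ∀ x (hx : x ∈ X) x' (hx' : x' ∈ X),
      ‖φ ⟨x, AddSubgroup.subset_closure hx⟩ - φ ⟨x', AddSubgroup.subset_closure hx'⟩‖ ≤
        C * ‖x - x'‖ := by
  obtain ⟨M, hM0, hM⟩ := exists_norm_map_sub_le_mul_add_two hR hfin φ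
  refine ⟨(M + 1) * (1 + 2 / δ), by positivity, fun x hx x' hx' => ?_⟩
  rcases eq_or_ne x x' with rfl | hne
  · simp
  have hδx : δ ≤ ‖x - x'‖ := dist_eq_norm x x' ▸ hdisc x hx x' hx' hne
  have h2 : 2 ≤ 2 / δ * ‖x - x'‖ := by
    rw [div_mul_eq_mul_div, le_div_iff₀ hδ]
    linarith
  calc _ ≤ M * (‖x - x'‖ + 2) := hM x hx x' hx'
    _ ≤ (M + 1) * ((1 + 2 / δ) * ‖x - x'‖) := by
        gcongr
        · linarith
        · linarith
    _ = _ := by ring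

end Lipschitz

def addressHom {d s : ℕ} {X : Set (EuclideanSpace ℝ (Fin d))}
    (b : Module.Basis (Fin s) ℤ (AddSubgroup.closure X)) :
    AddSubgroup.closure X →+ EuclideanSpace ℝ (Fin s) :=
  AddMonoidHom.mk' (address b) fun u v => by ext i; simp [address]

/-- For a Delone set of finite type, the subgroup `[X]` generated by `X` is finitely generated,
and every address map is globally Lipschitz on `X`. -/
theorem finite_type_address_lipschitz {d : ℕ} (X : Set (EuclideanSpace ℝ (Fin d)))
    (hX : IsDelone X) (hft : ∀ T > 0, ((X - X) ∩ Metric.ball 0 T).Finite) :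
    (AddSubgroup.closure X).FG ∧
    ∀ (s : ℕ) (b : Module.Basis (Fin s) ℤ (AddSubgroup.closure X)),
      ∃ C₀ > 0, ∀ x (hx : x ∈ X) x' (hx' : x' ∈ X),
        ‖address b ⟨x, AddSubgroup.subset_closure hx⟩ -
          address b ⟨x', AddSubgroup.subset_closure hx'⟩‖ ≤ C₀ * ‖x - x'‖ := by
  obtain ⟨⟨r, hr, hdisc⟩, ⟨R, hR, hdense⟩⟩ := hX
  have hfin := hft (2 * R + 2) (by positivity)
  exact ⟨AddSubgroup.fg_closure_of_forall_exists_dist_le hdense hfin, fun s b =>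
    exists_norm_map_sub_le_mul_norm_sub (by positivity) hdisc hdense hfin (addressHom b)⟩
end
end

section
/- Let X be a Delone set in ℝ^d such that the additive subgroup [X] generated by X is free of finite rank s with ℤ-basis v₁,…,v_s, and suppose the associated address map φ : [X] → ℤ^s is globally Lipschitz on X, i.e. there is C₀ > 0 with ‖φ(x) − φ(x')‖ ≤ C₀‖x − x'‖ for all x, x' ∈ X. Then X is of finite type: (X − X) ∩ B(0,T) is finite for every T > 0. -/
open scoped Pointwise

noncomputable section

/-!
The address map is additive, so the Lipschitz bound turns into a bound on the address of
every difference `x - x'` with `x, x' ∈ X`. Differences of norm `< T` therefore have integer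
coordinates bounded by `C₀ T`, and there are only finitely many such elements of `[X]`.
-/

section Address

variable {d s : ℕ} {X : Set (EuclideanSpace ℝ (Fin d))}
  (b : Module.Basis (Fin s) ℤ (AddSubgroup.closure X))

theorem address_sub (x y : AddSubgroup.closure X) :
    address b (x - y) = address b x - address b y := by
  ext i
  simp [address]

theorem abs_repr_le_norm_address (x : AddSubgroup.closure X) (i : Fin s) :
    |(b.repr x i : ℝ)| ≤ ‖address b x‖ :=
  PiLp.norm_apply_le (address b x) i

theorem finite_setOf_norm_address_le (K : ℝ) :
    {x : AddSubgroup.closure X | ‖address b x‖ ≤ K}.Finite := by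
  have hbox : (Set.univ.pi fun _ : Fin s => Set.Icc (-⌈K⌉) ⌈K⌉).Finite :=
    Set.Finite.pi fun _ => Set.finite_Icc _ _
  refine (hbox.preimage b.equivFun.injective.injOn).subset fun x hx i _ => ?_
  have hK : |(b.repr x i : ℝ)| ≤ ⌈K⌉ :=
    (abs_repr_le_norm_address b x i).trans (hx.out.trans (Int.le_ceil K))
  exact abs_le.mp (by exact_mod_cast hK)

theorem sub_inter_ball_subset_image_norm_address_le {C₀ : ℝ} (hC₀ : 0 ≤ C₀)
    (hlip : ∀ x (hx : x ∈ X) x' (hx' : x' ∈ X),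
      ‖address b ⟨x, AddSubgroup.subset_closure hx⟩ -
        address b ⟨x', AddSubgroup.subset_closure hx'⟩‖ ≤ C₀ * ‖x - x'‖) (T : ℝ) :
    (X - X) ∩ Metric.ball 0 T ⊆
      Subtype.val '' {x : AddSubgroup.closure X | ‖address b x‖ ≤ C₀ * T} := by
  rintro _ ⟨⟨x, hx, x', hx', rfl⟩, hT⟩
  refine ⟨⟨x, AddSubgroup.subset_closure hx⟩ - ⟨x', AddSubgroup.subset_closure hx'⟩, ?_, rfl⟩
  rw [mem_ball_zero_iff] at hT
  calc ‖address b (⟨x, _⟩ - ⟨x', _⟩)‖ ≤ C₀ * ‖x - x'‖ := by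
        rw [address_sub]; exact hlip x hx x' hx'
    _ ≤ C₀ * T := mul_le_mul_of_nonneg_left hT.le hC₀

end Address

theorem address_lipschitz_finite_type_general {d s : ℕ} (X : Set (EuclideanSpace ℝ (Fin d)))
    (b : Module.Basis (Fin s) ℤ (AddSubgroup.closure X))
    (C₀ : ℝ) (hC₀ : 0 < C₀)
    (hlip : ∀ x (hx : x ∈ X) x' (hx' : x' ∈ X),
      ‖address b ⟨x, AddSubgroup.subset_closure hx⟩ -
        address b ⟨x', AddSubgroup.subset_closure hx'⟩‖ ≤ C₀ * ‖x - x'‖) :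
    ∀ T > 0, ((X - X) ∩ Metric.ball 0 T).Finite := fun T _ =>
  ((finite_setOf_norm_address_le b (C₀ * T)).image Subtype.val).subset
    (sub_inter_ball_subset_image_norm_address_le b hC₀.le hlip T)

/-- If the subgroup generated by a Delone set `X` is free of finite rank with a basis whose
associated address map is globally Lipschitz on `X`, then `X` is of finite type. -/
theorem address_lipschitz_finite_type {d s : ℕ} (X : Set (EuclideanSpace ℝ (Fin d)))
    (hX : IsDelone X) (b : Module.Basis (Fin s) ℤ (AddSubgroup.closure X))
    (C₀ : ℝ) (hC₀ : 0 < C₀)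
    (hlip : ∀ x (hx : x ∈ X) x' (hx' : x' ∈ X),
      ‖address b ⟨x, AddSubgroup.subset_closure hx⟩ -
        address b ⟨x', AddSubgroup.subset_closure hx'⟩‖ ≤ C₀ * ‖x - x'‖) :
    ∀ T > 0, ((X - X) ∩ Metric.ball 0 T).Finite :=
  address_lipschitz_finite_type_general X b C₀ hC₀ hlip
end
end

section
/- Let X be a Delone set in ℝ^d for which there exists a finite set F ⊆ ℝ^d with X − X ⊆ X + F. Then the additive subgroup [X] generated by X is finitely generated, and for every free ℤ-basis v₁,…,v_s of [X] with associated address map φ : [X] → ℤ^s, the map φ is almost linear on X: there exist a linear map L : ℝ^d → ℝ^s and a constant C > 0 such that ‖φ(x) − L x‖ ≤ C for all x ∈ X. -/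
/-! Choosing `y ∈ X` within `R` of `x / 2` and writing `x - y = z + f ∈ X + F` splits every
`x ∈ X` as `y + z + f` with `‖y‖, ‖z‖ ≤ ‖x‖ / 2 + R + max_{f ∈ F} ‖f‖`; by induction on `‖x‖`,
`[X]` is then generated by the finitely many points of `X` in a fixed ball together with `F ∩ [X]`.

For an additive map `φ` on `[X]`, let `χ` be a retraction of `ℝ^d` onto `X` moving points by at
most `R`. Then `g = φ ∘ χ` is quasi-additive: `g (a + b) - g a - g b` is the value of `φ` at a point
of `X - X - X ⊆ X + F + F` of norm at most `3R`, and there are only finitely many such points.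
The Hyers–Ulam limit `Λ t = lim 2⁻ⁿ g (2ⁿ t)` is additive, within bounded distance of `g`, and
bounded on the unit ball, hence continuous and `ℝ`-linear. -/

open scoped Pointwise

noncomputable section


open scoped Pointwise

noncomputable section

open Filter Topology Metric

def BoundedlyFinite {E : Type*} [SeminormedAddCommGroup E] (s : Set E) : Prop :=
  ∀ ρ : ℝ, (s ∩ closedBall 0 ρ).Finite

theorem TotallyBounded.finite_of_forall_le_dist {α : Type*} [PseudoMetricSpace α] {s : Set α}
    {ε : ℝ} (hs : TotallyBounded s) (hε : 0 < ε)
    (hsep : ∀ x ∈ s, ∀ y ∈ s, x ≠ y → ε ≤ dist x y) : s.Finite := by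
  obtain ⟨t, ht, hcover⟩ := Metric.totallyBounded_iff.1 hs (ε / 2) (half_pos hε)
  have hsub : ∀ y, (s ∩ ball y (ε / 2)).Subsingleton := by
    rintro y a ⟨ha, hay⟩ b ⟨hb, hby⟩
    by_contra hab
    rw [mem_ball] at hay hby
    linarith [hsep a ha b hb hab, dist_triangle_right a b y]
  refine (ht.biUnion fun y _ => (hsub y).finite).subset fun x hx => ?_
  obtain ⟨y, hy, hxy⟩ := Set.mem_iUnion₂.1 (hcover hx)
  exact Set.mem_biUnion hy ⟨hx, hxy⟩

section BoundedlyFinite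

variable {E : Type*} [SeminormedAddCommGroup E] {s t F : Set E}

theorem boundedlyFinite_of_forall_le_dist [ProperSpace E] {ε : ℝ} (hε : 0 < ε)
    (hsep : ∀ x ∈ s, ∀ y ∈ s, x ≠ y → ε ≤ dist x y) : BoundedlyFinite s := fun ρ =>
  ((isCompact_closedBall 0 ρ).totallyBounded.subset Set.inter_subset_right).finite_of_forall_le_dist
    hε fun x hx y hy => hsep x hx.1 y hy.1

theorem BoundedlyFinite.mono (ht : BoundedlyFinite t) (hst : s ⊆ t) : BoundedlyFinite s :=
  fun ρ => (ht ρ).subset (Set.inter_subset_inter_left _ hst)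

theorem BoundedlyFinite.add_finite (hs : BoundedlyFinite s) (hF : F.Finite) :
    BoundedlyFinite (s + F) := by
  intro ρ
  obtain ⟨M, hM⟩ := hF.isBounded.exists_norm_le
  refine ((hs (ρ + M)).add hF).subset ?_
  rintro _ ⟨⟨x, hx, f, hf, rfl⟩, hxf⟩
  refine ⟨x, ⟨hx, ?_⟩, f, hf, rfl⟩
  rw [mem_closedBall_zero_iff] at hxf ⊢
  calc ‖x‖ = ‖x + f - f‖ := by rw [add_sub_cancel_right]
    _ ≤ ‖x + f‖ + ‖f‖ := norm_sub_le _ _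
    _ ≤ ρ + M := add_le_add hxf (hM f hf)

end BoundedlyFinite

theorem Set.sub_sub_subset_add_add_of_sub_subset {E : Type*} [AddCommGroup E] {X F : Set E}
    (h : X - X ⊆ X + F) : X - X - X ⊆ X + F + F :=
  calc X - X - X ⊆ X + F - X := Set.sub_subset_sub_right h
    _ = X - X + F := add_sub_right_comm _ _ _
    _ ⊆ X + F + F := Set.add_subset_add_right h

section Split

variable {E : Type*} [SeminormedAddCommGroup E] {X F : Set E}

theorem exists_split_of_forall_dist_le [NormedSpace ℝ E] {R M : ℝ}
    (hdense : ∀ z, ∃ x ∈ X, dist z x ≤ R) (hM : ∀ f ∈ F, ‖f‖ ≤ M) (hXF : X - X ⊆ X + F)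
    {x : E} (hx : x ∈ X) :
    ∃ y ∈ X, ∃ z ∈ X, ∃ f ∈ F,
      x = y + z + f ∧ ‖y‖ ≤ ‖x‖ / 2 + (R + M) ∧ ‖z‖ ≤ ‖x‖ / 2 + (R + M) := by
  obtain ⟨y, hy, hyR⟩ := hdense ((2 : ℝ)⁻¹ • x)
  obtain ⟨z, hz, f, hf, hzf⟩ := Set.mem_add.1 (hXF (Set.sub_mem_sub hx hy))
  rw [dist_eq_norm] at hyR
  have hhalf : ‖(2 : ℝ)⁻¹ • x‖ = ‖x‖ / 2 := by
    rw [norm_smul, norm_inv, Real.norm_two, inv_mul_eq_div]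
  have hfM : 0 ≤ M := (norm_nonneg f).trans (hM f hf)
  refine ⟨y, hy, z, hz, f, hf, by rw [add_assoc, hzf, add_sub_cancel], ?_, ?_⟩
  · calc ‖y‖ = ‖(2 : ℝ)⁻¹ • x - ((2 : ℝ)⁻¹ • x - y)‖ := by rw [sub_sub_cancel]
      _ ≤ ‖x‖ / 2 + R := hhalf ▸ norm_sub_le_of_le le_rfl hyR
      _ ≤ ‖x‖ / 2 + (R + M) := by linarith
  · have hz_eq : z = (2 : ℝ)⁻¹ • x + ((2 : ℝ)⁻¹ • x - y) - f := by
      rw [eq_sub_iff_add_eq, hzf, add_sub_left_comm, ← add_sub_assoc, ← add_smul]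
      norm_num
    calc ‖z‖ ≤ ‖(2 : ℝ)⁻¹ • x‖ + ‖(2 : ℝ)⁻¹ • x - y‖ + ‖f‖ :=
          hz_eq ▸ norm_sub_le_of_le (norm_add_le _ _) le_rfl
      _ ≤ ‖x‖ / 2 + (R + M) := by linarith [hM f hf]

theorem closure_eq_closure_inter_closedBall_union {c : ℝ}
    (hsplit : ∀ x ∈ X, ∃ y ∈ X, ∃ z ∈ X, ∃ f ∈ F,
      x = y + z + f ∧ ‖y‖ ≤ ‖x‖ / 2 + c ∧ ‖z‖ ≤ ‖x‖ / 2 + c) :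
    AddSubgroup.closure X =
      AddSubgroup.closure (X ∩ closedBall 0 (2 * c + 2) ∪ F ∩ AddSubgroup.closure X) := by
  set H := AddSubgroup.closure (X ∩ closedBall 0 (2 * c + 2) ∪ F ∩ AddSubgroup.closure X)
  refine le_antisymm ((AddSubgroup.closure_le _).2 fun x hx => ?_)
    ((AddSubgroup.closure_le _).2 ?_)
  · suffices ∀ n : ℕ, ∀ x ∈ X, ‖x‖ < n → x ∈ H from
      this (⌊‖x‖⌋₊ + 1) x hx (by push_cast; exact Nat.lt_floor_add_one _)
    intro n
    induction n with
    | zero => exact fun x _ hxn => absurd hxn (by simp)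
    | succ n ih =>
      intro x hx hxn
      by_cases hsmall : ‖x‖ ≤ 2 * c + 2
      · exact AddSubgroup.subset_closure (Or.inl ⟨hx, mem_closedBall_zero_iff.2 hsmall⟩)
      obtain ⟨y, hy, z, hz, f, hf, rfl, hyn, hzn⟩ := hsplit x hx
      push_cast at hxn
      have hfX : f ∈ AddSubgroup.closure X := by
        rw [show f = y + z + f - y - z by abel]
        exact sub_mem (sub_mem (AddSubgroup.subset_closure hx) (AddSubgroup.subset_closure hy))
          (AddSubgroup.subset_closure hz)
      exact add_mem (add_mem (ih y hy (by linarith)) (ih z hz (by linarith)))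
        (AddSubgroup.subset_closure (Or.inr ⟨hf, hfX⟩))
  · rintro x (hx | hx)
    · exact AddSubgroup.subset_closure hx.1
    · exact hx.2

end Split

theorem exists_addMonoidHom_norm_sub_le_of_norm_map_add_sub_le {E V : Type*} [AddCommGroup E]
    [NormedAddCommGroup V] [NormedSpace ℝ V] [CompleteSpace V] {g : E → V} {K : ℝ}
    (hg : ∀ x y, ‖g (x + y) - g x - g y‖ ≤ K) : ∃ Λ : E →+ V, ∀ x, ‖g x - Λ x‖ ≤ K := by
  set u : E → ℕ → V := fun x n => ((2 : ℝ) ^ n)⁻¹ • g (2 ^ n • x) with hu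
  have hscale : ∀ x y n, ‖((2 : ℝ) ^ n)⁻¹ • (g (x + y) - g x - g y)‖ ≤ K / 2 ^ n := fun x y n => by
    rw [norm_smul, norm_inv, norm_pow, Real.norm_two, inv_mul_eq_div]
    gcongr
    exact hg x y
  have hstep : ∀ x n, dist (u x n) (u x (n + 1)) ≤ K / 2 / 2 ^ n := by
    intro x n
    have h : u x (n + 1) - u x n =
        ((2 : ℝ) ^ (n + 1))⁻¹ • (g (2 ^ n • x + 2 ^ n • x) - g (2 ^ n • x) - g (2 ^ n • x)) := by
      rw [← two_nsmul, ← mul_nsmul', ← pow_succ']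
      module
    rw [dist_comm, dist_eq_norm, h, div_div, ← pow_succ']
    exact hscale _ _ _
  choose Λ hΛ using fun x => cauchySeq_tendsto_of_complete (cauchySeq_of_le_geometric_two (hstep x))
  have hadd : ∀ x y, Λ (x + y) = Λ x + Λ y := by
    intro x y
    have hzero : Tendsto (fun n => u (x + y) n - u x n - u y n) atTop (𝓝 0) := by
      refine squeeze_zero_norm (fun n => ?_)
        ((tendsto_const_nhds (x := K)).div_atTop (tendsto_pow_atTop_atTop_of_one_lt one_lt_two))
      simpa only [hu, smul_sub, nsmul_add] using hscale (2 ^ n • x) (2 ^ n • y) n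
    rw [← sub_eq_zero, ← sub_sub]
    exact tendsto_nhds_unique (((hΛ (x + y)).sub (hΛ x)).sub (hΛ y)) hzero
  refine ⟨AddMonoidHom.mk' Λ hadd, fun x => ?_⟩
  simpa [hu, dist_eq_norm] using dist_le_of_le_geometric_two_of_tendsto₀ (hstep x) (hΛ x)

theorem AddMonoidHom.continuous_of_forall_norm_le_one {E V : Type*} [SeminormedAddCommGroup E]
    [SeminormedAddCommGroup V] [NormedSpace ℝ V] (f : E →+ V) {B : ℝ}
    (hB : ∀ x, ‖x‖ ≤ 1 → ‖f x‖ ≤ B) : Continuous f := by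
  refine continuous_of_continuousAt_zero f ?_
  rw [ContinuousAt, map_zero, Metric.tendsto_nhds_nhds]
  intro ε hε
  have hB0 : 0 ≤ B := by simpa using hB 0 (by simp)
  obtain ⟨n, hn⟩ := exists_nat_gt (B / ε)
  have hn0 : (0 : ℝ) < n := (div_nonneg hB0 hε.le).trans_lt hn
  refine ⟨1 / n, by positivity, fun x hx => ?_⟩
  rw [dist_zero_right] at hx ⊢
  have hnx : ‖n • x‖ ≤ 1 := by
    calc ‖n • x‖ ≤ n * ‖x‖ := norm_nsmul_le
      _ ≤ 1 := by rw [lt_div_iff₀ hn0] at hx; linarith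
  have hfx : n * ‖f x‖ ≤ B := by
    have := hB _ hnx
    rwa [map_nsmul, ← Nat.cast_smul_eq_nsmul ℝ, norm_smul, Real.norm_natCast] at this
  rw [div_lt_iff₀ hε] at hn
  nlinarith

theorem exists_retraction_of_forall_dist_le {α : Type*} [PseudoMetricSpace α] {X : Set α} {R : ℝ}
    (hdense : ∀ z, ∃ x ∈ X, dist z x ≤ R) :
    ∃ χ : α → α, (∀ t, χ t ∈ X ∧ dist t (χ t) ≤ R) ∧ ∀ x ∈ X, χ x = x := by
  classical
  choose χ hχ using hdense
  refine ⟨fun t => if t ∈ X then t else χ t, fun t => ?_, fun x hx => if_pos hx⟩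
  dsimp only
  split_ifs with ht
  · exact ⟨ht, by simpa using dist_nonneg.trans (hχ t).2⟩
  · exact hχ t

theorem AddMonoidHom.exists_norm_le_of_finite {E V : Type*} [AddGroup E] [Norm V] [AddGroup V]
    {G : AddSubgroup E} (φ : G →+ V) {S : Set E} (hS : S.Finite) :
    ∃ B, ∀ w : G, (w : E) ∈ S → ‖φ w‖ ≤ B := by
  obtain ⟨B, hB⟩ := ((hS.preimage Subtype.val_injective.injOn).image fun w => ‖φ w‖).bddAbove
  exact ⟨B, fun w hw => hB ⟨w, hw, rfl⟩⟩

theorem exists_continuousLinearMap_norm_sub_le {E V : Type*} [NormedAddCommGroup E]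
    [NormedSpace ℝ E] [NormedAddCommGroup V] [NormedSpace ℝ V] [CompleteSpace V]
    {X : Set E} {R : ℝ} (hdense : ∀ z, ∃ x ∈ X, dist z x ≤ R) (hX : BoundedlyFinite X)
    (hX3 : BoundedlyFinite (X - X - X)) {G : AddSubgroup E} (hXG : X ⊆ G) (φ : G →+ V) :
    ∃ (Λ : E →L[ℝ] V) (C : ℝ), ∀ x (hx : x ∈ X), ‖φ ⟨x, hXG hx⟩ - Λ x‖ ≤ C := by
  obtain ⟨χ, hχ, hχX⟩ := exists_retraction_of_forall_dist_le hdense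
  simp only [dist_eq_norm] at hχ
  obtain ⟨K, hK⟩ := φ.exists_norm_le_of_finite (hX3 (3 * R))
  obtain ⟨B, hB⟩ := φ.exists_norm_le_of_finite (hX (1 + R))
  set g : E → V := fun t => φ ⟨χ t, hXG (hχ t).1⟩
  have hg : ∀ a b, ‖g (a + b) - g a - g b‖ ≤ K := by
    intro a b
    simp only [g, ← map_sub]
    refine hK _ ⟨Set.sub_mem_sub (Set.sub_mem_sub (hχ _).1 (hχ _).1) (hχ _).1, ?_⟩
    rw [mem_closedBall_zero_iff]
    calc ‖χ (a + b) - χ a - χ b‖ = ‖(a - χ a) + (b - χ b) - (a + b - χ (a + b))‖ := by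
          congr 1; abel
      _ ≤ R + R + R := norm_sub_le_of_le (norm_add_le_of_le (hχ a).2 (hχ b).2) (hχ _).2
      _ = 3 * R := by ring
  obtain ⟨Λ, hΛ⟩ := exists_addMonoidHom_norm_sub_le_of_norm_map_add_sub_le hg
  have hΛB : ∀ t, ‖t‖ ≤ 1 → ‖Λ t‖ ≤ B + K := by
    intro t ht
    have hgt : ‖g t‖ ≤ B := by
      refine hB _ ⟨(hχ t).1, mem_closedBall_zero_iff.2 ?_⟩
      calc ‖χ t‖ = ‖t - (t - χ t)‖ := by rw [sub_sub_cancel]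
        _ ≤ 1 + R := norm_sub_le_of_le ht (hχ t).2
    calc ‖Λ t‖ = ‖g t - (g t - Λ t)‖ := by rw [sub_sub_cancel]
      _ ≤ B + K := norm_sub_le_of_le hgt (hΛ t)
  refine ⟨Λ.toRealLinearMap (Λ.continuous_of_forall_norm_le_one hΛB), K, fun x hx => ?_⟩
  have hgx : g x = φ ⟨x, hXG hx⟩ := by simp only [g, hχX x hx]
  rw [← hgx]
  exact hΛ x

theorem address_add {d s : ℕ} {X : Set (EuclideanSpace ℝ (Fin d))}
    (b : Module.Basis (Fin s) ℤ (AddSubgroup.closure X)) (x y : AddSubgroup.closure X) :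
    address b (x + y) = address b x + address b y := by
  ext i
  simp [address]

/-- If `X` is a Delone set with `X − X ⊆ X + F` for a finite set `F`, then the subgroup `[X]`
generated by `X` is finitely generated, and every address map is almost linear on `X`. -/
theorem meyer_address_almost_linear {d : ℕ} (X : Set (EuclideanSpace ℝ (Fin d)))
    (hX : IsDelone X) (F : Set (EuclideanSpace ℝ (Fin d))) (hF : F.Finite)
    (hXF : X - X ⊆ X + F) :
    (AddSubgroup.closure X).FG ∧
    ∀ (s : ℕ) (b : Module.Basis (Fin s) ℤ (AddSubgroup.closure X)),
      ∃ (L : EuclideanSpace ℝ (Fin d) →ₗ[ℝ] EuclideanSpace ℝ (Fin s)) (C : ℝ), 0 < C ∧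
        ∀ x (hx : x ∈ X),
          ‖address b ⟨x, AddSubgroup.subset_closure hx⟩ - L x‖ ≤ C := by
  obtain ⟨⟨r, hr, hdisc⟩, ⟨R, -, hdense⟩⟩ := hX
  obtain ⟨M, hM⟩ := hF.isBounded.exists_norm_le
  have hXfin : BoundedlyFinite X := boundedlyFinite_of_forall_le_dist (by positivity) hdisc
  have hX3 : BoundedlyFinite (X - X - X) :=
    ((hXfin.add_finite hF).add_finite hF).mono (Set.sub_sub_subset_add_add_of_sub_subset hXF)
  have hgen := closure_eq_closure_inter_closedBall_union fun x hx =>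
    exists_split_of_forall_dist_le hdense hM hXF hx
  refine ⟨(AddSubgroup.fg_iff _).2
    ⟨_, hgen.symm, (hXfin _).union (hF.subset Set.inter_subset_left)⟩, fun s b => ?_⟩
  obtain ⟨Λ, C, hC⟩ := exists_continuousLinearMap_norm_sub_le hdense hXfin hX3
    AddSubgroup.subset_closure (AddMonoidHom.mk' (address b) (address_add b))
  exact ⟨Λ, max C 1, by positivity, fun x hx => (hC x hx).trans (le_max_left _ _)⟩
end
end
end

section
/- Let X be a Delone set in ℝ^d whose generated additive subgroup [X] is free of finite rank s with ℤ-basis v₁,…,v_s and associated address map φ : [X] → ℤ^s, and suppose φ is almost linear on X: there exist a linear map L : ℝ^d → ℝ^s and C > 0 such that ‖φ(x) − L x‖ ≤ C for all x ∈ X. Then X is a Meyer set, i.e. X − X is uniformly discrete: there exists ε > 0 such that any two distinct points of X − X are at distance ≥ ε. -/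
open scoped Pointwise

noncomputable section


open scoped Pointwise

noncomputable section

/-!
For `u, w ∈ X - X`, the difference `v = u - w` lies in `[X]`, and since the address map is
additive, its deviation from `L` at `v` is at most `4C`. If moreover `‖v‖ < 1`, the address of
`v` is bounded by `4C + ‖L‖`, and only finitely many elements of the free group `[X]` have
bounded address. So the differences of `X - X` of norm `< 1` form a finite set, and its
nonzero elements are bounded away from `0`.
-/

open Metric

lemma exists_pos_le_norm_of_finite {E : Type*} [NormedAddCommGroup E] {S : Set E}
    (hS : S.Finite) (h0 : (0 : E) ∉ S) : ∃ ε > 0, ∀ v ∈ S, ε ≤ ‖v‖ := by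
  obtain ⟨ε, hε, hball⟩ := Metric.isOpen_iff.mp hS.isClosed.isOpen_compl 0 h0
  refine ⟨ε, hε, fun v hv => ?_⟩
  by_contra! h
  exact hball (mem_ball_zero_iff.mpr h) hv

lemma exists_pos_le_dist_of_finite_sub_inter_ball {E : Type*} [NormedAddCommGroup E]
    {Z : Set E} (h : ((Z - Z) ∩ ball 0 1).Finite) :
    ∃ ε > 0, ∀ u ∈ Z, ∀ w ∈ Z, u ≠ w → ε ≤ dist u w := by
  obtain ⟨ε, hε, hle⟩ := exists_pos_le_norm_of_finite (h.sdiff (t := {0})) (by simp)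
  refine ⟨min 1 ε, lt_min one_pos hε, fun u hu w hw huw => ?_⟩
  rw [dist_eq_norm]
  by_cases h1 : ‖u - w‖ < 1
  · exact (min_le_right _ _).trans
      (hle _ ⟨⟨Set.sub_mem_sub hu hw, mem_ball_zero_iff.mpr h1⟩, sub_ne_zero.mpr huw⟩)
  · exact (min_le_left _ _).trans (not_lt.mp h1)

lemma AddMonoidHom.norm_map_le_of_mem_sub {G F : Type*} [AddGroup G] [SeminormedAddGroup F]
    (f : G →+ F) {T : Set G} {C : ℝ} (hT : ∀ x ∈ T, ‖f x‖ ≤ C) :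
    ∀ x ∈ T - T, ‖f x‖ ≤ 2 * C := by
  rintro _ ⟨x, hx, y, hy, rfl⟩
  rw [map_sub, two_mul]
  exact (norm_sub_le _ _).trans (add_le_add (hT x hx) (hT y hy))

lemma Module.Basis.finite_setOf_abs_repr_le {ι M : Type*} [Fintype ι] [AddCommGroup M]
    (b : Module.Basis ι ℤ M) (R : ℝ) : {v : M | ∀ i, |(b.repr v i : ℝ)| ≤ R}.Finite := by
  classical
  have hinj : Function.Injective fun (v : M) (i : ι) => b.repr v i :=
    fun v w h => b.repr.injective (Finsupp.ext (congrFun h))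
  refine ((Set.finite_Icc (-⌈R⌉ : ι → ℤ) ⌈R⌉).preimage hinj.injOn).subset fun v hv => ?_
  have hR (i : ι) : |b.repr v i| ≤ ⌈R⌉ := by exact_mod_cast (hv i).trans (Int.le_ceil R)
  exact ⟨fun i => neg_le_of_abs_le (hR i), fun i => le_of_abs_le (hR i)⟩

section Address

variable {d s : ℕ} {X : Set (EuclideanSpace ℝ (Fin d))}
  (b : Module.Basis (Fin s) ℤ (AddSubgroup.closure X))
  (L : EuclideanSpace ℝ (Fin d) →ₗ[ℝ] EuclideanSpace ℝ (Fin s))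

lemma finite_setOf_norm_address_le_s5 (R : ℝ) : {v | ‖address b v‖ ≤ R}.Finite :=
  (b.finite_setOf_abs_repr_le R).subset fun _ hv i => (PiLp.norm_apply_le _ i).trans hv

def addressDefect : AddSubgroup.closure X →+ EuclideanSpace ℝ (Fin s) where
  toFun v := address b v - L v
  map_zero' := by ext; simp [address]
  map_add' v w := by
    ext
    simp only [address, map_add, Finsupp.coe_add, Pi.add_apply, Int.cast_add,
      AddSubgroup.coe_add, PiLp.sub_apply, PiLp.add_apply]
    ring

lemma finite_sub_sub_inter_ball_of_norm_address_sub_le {C : ℝ}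
    (halm : ∀ x (hx : x ∈ X), ‖address b ⟨x, AddSubgroup.subset_closure hx⟩ - L x‖ ≤ C) :
    ((X - X - (X - X)) ∩ ball 0 1).Finite := by
  let L' := LinearMap.toContinuousLinearMap L
  refine ((finite_setOf_norm_address_le_s5 b (2 * (2 * C) + ‖L'‖)).image Subtype.val).subset ?_
  rintro _ ⟨⟨_, ⟨x₁, hx₁, y₁, hy₁, rfl⟩, _, ⟨x₂, hx₂, y₂, hy₂, rfl⟩, rfl⟩, hball⟩
  let pt (x : EuclideanSpace ℝ (Fin d)) (hx : x ∈ X) : AddSubgroup.closure X :=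
    ⟨x, AddSubgroup.subset_closure hx⟩
  let g := (pt x₁ hx₁ - pt y₁ hy₁) - (pt x₂ hx₂ - pt y₂ hy₂)
  refine ⟨g, ?_, rfl⟩
  have hdefect : ‖addressDefect b L g‖ ≤ 2 * (2 * C) :=
    (addressDefect b L).norm_map_le_of_mem_sub
      ((addressDefect b L).norm_map_le_of_mem_sub (T := Subtype.val ⁻¹' X)
        fun x hx => halm x hx) g
      ⟨_, ⟨_, hx₁, _, hy₁, rfl⟩, _, ⟨_, hx₂, _, hy₂, rfl⟩, rfl⟩
  have hL : ‖L g‖ ≤ ‖L'‖ :=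
    (L'.le_opNorm g).trans (mul_le_of_le_one_right (norm_nonneg _) (mem_ball_zero_iff.mp hball).le)
  calc ‖address b g‖ = ‖addressDefect b L g + L g‖ := congrArg norm (sub_add_cancel _ _).symm
    _ ≤ 2 * (2 * C) + ‖L'‖ := (norm_add_le _ _).trans (add_le_add hdefect hL)

end Address

theorem address_almost_linear_meyer_general {d s : ℕ} (X : Set (EuclideanSpace ℝ (Fin d)))
    (b : Module.Basis (Fin s) ℤ (AddSubgroup.closure X))
    (L : EuclideanSpace ℝ (Fin d) →ₗ[ℝ] EuclideanSpace ℝ (Fin s)) (C : ℝ)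
    (halm : ∀ x (hx : x ∈ X),
      ‖address b ⟨x, AddSubgroup.subset_closure hx⟩ - L x‖ ≤ C) :
    ∃ ε > 0, ∀ u ∈ X - X, ∀ w ∈ X - X, u ≠ w → ε ≤ dist u w :=
  exists_pos_le_dist_of_finite_sub_inter_ball
    (finite_sub_sub_inter_ball_of_norm_address_sub_le b L halm)

/-- If the subgroup generated by a Delone set `X` is free of finite rank with a basis whose
associated address map is almost linear on `X`, then `X` is a Meyer set, i.e. `X − X` is
uniformly discrete. -/
theorem address_almost_linear_meyer {d s : ℕ} (X : Set (EuclideanSpace ℝ (Fin d)))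
    (hX : IsDelone X) (b : Module.Basis (Fin s) ℤ (AddSubgroup.closure X))
    (L : EuclideanSpace ℝ (Fin d) →ₗ[ℝ] EuclideanSpace ℝ (Fin s)) (C : ℝ) (hC : 0 < C)
    (halm : ∀ x (hx : x ∈ X),
      ‖address b ⟨x, AddSubgroup.subset_closure hx⟩ - L x‖ ≤ C) :
    ∃ ε > 0, ∀ u ∈ X - X, ∀ w ∈ X - X, u ≠ w → ε ≤ dist u w :=
  address_almost_linear_meyer_general X b L C halm
end
end
end

section
/- Let X be a Delone set in ℝ^d whose generated additive subgroup [X] is finitely generated, and let Q : ℝ^d → ℝ^d be a linear map with Q(X) ⊆ X. Then every complex eigenvalue of Q (i.e. every complex root of the characteristic polynomial of Q) is an algebraic integer. -/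
open scoped Pointwise

noncomputable section


open scoped Pointwise

noncomputable section

/-!
Relative density forces `X` to span `ℝ^d`, so `[X]` is a finitely generated `Q`-invariant
subgroup spanning `ℝ^d`. By Cayley–Hamilton over `ℤ`, the restriction of `Q` to `[X]` is killed
by a monic integer polynomial `p`, and since `[X]` spans, `p(Q) = 0`. Every complex eigenvalue `μ`
of `Q` is an eigenvalue of its complexification, hence `p(μ) = 0`.
-/

open Polynomial

theorem RelDense.span_eq_top {d : ℕ} {X : Set (EuclideanSpace ℝ (Fin d))} {R : ℝ}
    (hX : RelDense X R) : Submodule.span ℝ X = ⊤ := by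
  by_contra h
  obtain ⟨v, hv, hv0⟩ := (Submodule.ne_bot_iff _).1 (mt Submodule.orthogonal_eq_bot_iff.1 h)
  -- `z ⊥ X` with `‖z‖ > R`, so by Pythagoras no point of `X` is within `R` of `z`.
  set z := ((|R| + 1) / ‖v‖) • v
  have hz : ‖z‖ = |R| + 1 := by
    rw [norm_smul, Real.norm_of_nonneg (by positivity), div_mul_cancel₀ _ (norm_ne_zero_iff.2 hv0)]
  obtain ⟨x, hx, hzx⟩ := hX z
  have hzx_sq : ‖z - x‖ * ‖z - x‖ = ‖z‖ * ‖z‖ + ‖x‖ * ‖x‖ :=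
    norm_sub_sq_eq_norm_sq_add_norm_sq_real <|
      Submodule.inner_left_of_mem_orthogonal (Submodule.subset_span hx) (Submodule.smul_mem _ _ hv)
  rw [dist_eq_norm] at hzx
  nlinarith [le_abs_self R, norm_nonneg (z - x), norm_nonneg x]

theorem Module.End.isIntegral_of_mapsTo_of_span_eq_top {R S M : Type*} [CommRing R] [CommRing S]
    [Algebra R S] [AddCommGroup M] [Module S M] [Module R M] [IsScalarTower R S M]
    (L : Submodule R M) [Module.Finite R L] (hL : Submodule.span S (L : Set M) = ⊤)
    (f : Module.End S M) (hf : ∀ x ∈ L, f x ∈ L) : IsIntegral R f := by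
  let g : Module.End R L := (f.restrictScalars R).restrict hf
  have hpow (n : ℕ) (x : L) : (f ^ n) x = (g ^ n) x := by
    induction n generalizing x with
    | zero => rfl
    | succ n ih =>
      rw [pow_succ, pow_succ, Module.End.mul_apply, Module.End.mul_apply]
      exact ih (g x)
  have haeval (q : R[X]) (x : L) : aeval f q x = aeval g q x := by
    induction q using Polynomial.induction_on' with
    | add p q hp hq => simp [hp, hq]
    | monomial n a => simp [aeval_monomial, hpow]
  obtain ⟨p, hp, hgp⟩ := Algebra.IsIntegral.isIntegral (R := R) g
  refine ⟨p, hp, LinearMap.ext_on hL fun x hx ↦ ?_⟩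
  simpa [← aeval_def, show aeval g p = 0 from hgp] using haeval p ⟨x, hx⟩

theorem Module.End.isIntegral_int_of_mapsTo {S V : Type*} [CommRing S] [AddCommGroup V]
    [Module S V] {X : Set V} (hspan : Submodule.span S X = ⊤) (hfg : (AddSubgroup.closure X).FG)
    {f : Module.End S V} (hf : Set.MapsTo f X X) : IsIntegral ℤ f := by
  let L := Submodule.span ℤ X
  have : Module.Finite ℤ L := Module.Finite.iff_fg.2 <| (Submodule.fg_iff_addSubgroup_fg L).2 <| by
    rwa [Submodule.span_int_eq_addSubgroupClosure]
  refine isIntegral_of_mapsTo_of_span_eq_top L (by rwa [Submodule.span_span_of_tower]) f ?_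
  exact Submodule.span_le (p := L.comap (f.restrictScalars ℤ)).2
    fun x hx ↦ Submodule.subset_span (hf hx)

theorem IsIntegral.of_mem_spectrum {R K A : Type*} [CommRing R] [Field K] [Ring A]
    [Algebra R K] [Algebra K A] [Algebra R A] [IsScalarTower R K A] {a : A}
    (ha : IsIntegral R a) {μ : K} (hμ : μ ∈ spectrum K a) : IsIntegral R μ := by
  obtain ⟨p, hp, hpa⟩ := ha
  have : Nontrivial A :=
    not_subsingleton_iff_nontrivial.1 fun _ ↦ by simp [spectrum.of_subsingleton] at hμ
  refine ⟨p, hp, ?_⟩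
  -- spectral mapping: `p(μ) ∈ σ(p(a)) = σ(0) = {0}`
  have : eval μ (p.map (algebraMap R K)) ∈ spectrum K (aeval a (p.map (algebraMap R K))) :=
    spectrum.subset_polynomial_aeval a _ ⟨μ, hμ, rfl⟩
  rwa [aeval_map_algebraMap, aeval_def, hpa, spectrum.zero_eq, Set.mem_singleton_iff,
    eval_map] at this

theorem Module.End.isIntegral_of_isRoot_charpoly_map {K L V : Type*} [Field K] [Field L]
    [Algebra K L] [AddCommGroup V] [Module K V] [FiniteDimensional K V]
    {f : Module.End K V} (hf : IsIntegral ℤ f) {μ : L}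
    (hμ : (f.charpoly.map (algebraMap K L)).IsRoot μ) : IsIntegral ℤ μ := by
  rw [← LinearMap.charpoly_baseChange, ← Module.End.mem_spectrum_iff_isRoot_charpoly] at hμ
  have hf' : IsIntegral ℤ (f.baseChange L) :=
    hf.map ((Module.End.baseChangeHom K L V).restrictScalars ℤ)
  exact hf'.of_mem_spectrum hμ

/-- If `X` is a Delone set whose generated subgroup is finitely generated and `Q` is a linear
map with `Q(X) ⊆ X`, then every complex eigenvalue of `Q` (root of its characteristic
polynomial) is an algebraic integer. -/
theorem eigenvalues_algebraic_integers {d : ℕ} (X : Set (EuclideanSpace ℝ (Fin d)))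
    (hX : IsDelone X) (hfg : (AddSubgroup.closure X).FG)
    (Q : EuclideanSpace ℝ (Fin d) →ₗ[ℝ] EuclideanSpace ℝ (Fin d))
    (hQX : ∀ x ∈ X, Q x ∈ X) :
    ∀ z : ℂ, (Q.charpoly.map (algebraMap ℝ ℂ)).IsRoot z → IsIntegral ℤ z := by
  obtain ⟨-, R, -, hdense⟩ := hX
  have hQ : IsIntegral ℤ Q :=
    Module.End.isIntegral_int_of_mapsTo hdense.span_eq_top hfg fun x hx ↦ hQX x hx
  exact fun z hz ↦ Module.End.isIntegral_of_isRoot_charpoly_map hQ hz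
end
end
end

section
/- Let X ⊆ ℝ^d be relatively dense (there is R > 0 such that every closed ball of radius R meets X), let η > 1 be real, let M be an s × s real matrix, let φ : X → ℝ^s be a map, and let L : ℝ^d → ℝ^s be a linear map. Assume: (a) there is C > 0 with ‖φ(x) − L x‖ ≤ C for all x ∈ X; (b) ηX ⊆ X and φ(η x) = M φ(x) for all x ∈ X. Then the subspace H = L(ℝ^d) is contained in the η-eigenspace of M: M(Lz) = η·(Lz) for every z ∈ ℝ^d. -/
noncomputable section

/-- If `X ⊆ ℝ^d` is relatively dense, `ηX ⊆ X` with `η > 1`, `φ : X → ℝ^s` is almost linear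
with linear part `L` and intertwines the inflation with a matrix `M` (i.e. `φ(ηx) = Mφ(x)`),
then the range `H = L(ℝ^d)` is contained in the `η`-eigenspace of `M`. -/
theorem range_in_eigenspace {d s : ℕ} (X : Set (EuclideanSpace ℝ (Fin d)))
    (R : ℝ) (hR : 0 < R) (hrd : RelDense X R)
    (η : ℝ) (hη : 1 < η) (M : Matrix (Fin s) (Fin s) ℝ)
    (φ : EuclideanSpace ℝ (Fin d) → (Fin s → ℝ))
    (L : EuclideanSpace ℝ (Fin d) →ₗ[ℝ] (Fin s → ℝ))
    (C : ℝ) (hC : 0 < C)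
    (halm : ∀ x ∈ X, ‖φ x - L x‖ ≤ C)
    (hinfl : ∀ x ∈ X, η • x ∈ X)
    (hcompat : ∀ x ∈ X, φ (η • x) = M.mulVec (φ x)) :
    ∀ z : EuclideanSpace ℝ (Fin d), M.mulVec (L z) = η • (L z) := by
  classical
  set Mc : (Fin s → ℝ) →L[ℝ] (Fin s → ℝ) :=
    (Matrix.mulVecLin M).toContinuousLinearMap with hMcdef
  set Ac : EuclideanSpace ℝ (Fin d) →L[ℝ] (Fin s → ℝ) :=
    ((Matrix.mulVecLin M).comp L - η • L).toContinuousLinearMap with hAcdef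
  have hAc_apply : ∀ v, Ac v = M.mulVec (L v) - η • L v := by
    intro v
    rw [hAcdef, LinearMap.coe_toContinuousLinearMap']
    simp [Matrix.mulVecLin_apply]
  have hMc_apply : ∀ v, Mc v = M.mulVec v := by
    intro v
    rw [hMcdef, LinearMap.coe_toContinuousLinearMap']
    simp [Matrix.mulVecLin_apply]
  set K : ℝ := ‖Mc‖ * C + C with hK
  have key : ∀ x ∈ X, ‖Ac x‖ ≤ K := by
    intro x hx
    have h1 : Ac x = Mc (L x - φ x) + (φ (η • x) - L (η • x)) := by
      rw [hAc_apply, hMc_apply, hcompat x hx, map_smul, Matrix.mulVec_sub]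
      abel
    rw [h1]
    calc ‖Mc (L x - φ x) + (φ (η • x) - L (η • x))‖
        ≤ ‖Mc (L x - φ x)‖ + ‖φ (η • x) - L (η • x)‖ := norm_add_le _ _
      _ ≤ ‖Mc‖ * ‖L x - φ x‖ + C :=
          add_le_add (Mc.le_opNorm _) (halm _ (hinfl x hx))
      _ ≤ ‖Mc‖ * C + C :=
          add_le_add (mul_le_mul_of_nonneg_left
            (by rw [norm_sub_rev]; exact halm x hx) (norm_nonneg _)) le_rfl
  intro z
  have hbound : ∀ n : ℕ, (n : ℝ) * ‖Ac z‖ ≤ K + ‖Ac‖ * R := by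
    intro n
    obtain ⟨x, hxX, hdist⟩ := hrd ((n : ℝ) • z)
    have hsplit : Ac ((n : ℝ) • z) = Ac x + Ac ((n : ℝ) • z - x) := by
      rw [← map_add]; congr 1; abel
    have h2 : ‖Ac ((n : ℝ) • z)‖ ≤ K + ‖Ac‖ * R := by
      rw [hsplit]
      calc ‖Ac x + Ac ((n : ℝ) • z - x)‖
          ≤ ‖Ac x‖ + ‖Ac ((n : ℝ) • z - x)‖ := norm_add_le _ _
        _ ≤ K + ‖Ac‖ * R :=
            add_le_add (key x hxX)
              (le_trans (Ac.le_opNorm _)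
                (mul_le_mul_of_nonneg_left
                  (by rw [← dist_eq_norm]; exact hdist) (norm_nonneg _)))
    calc (n : ℝ) * ‖Ac z‖ = ‖Ac ((n : ℝ) • z)‖ := by
          rw [map_smul, norm_smul, Real.norm_natCast]
      _ ≤ K + ‖Ac‖ * R := h2
  have hzero : Ac z = 0 := by
    by_contra h
    have hpos : 0 < ‖Ac z‖ := norm_pos_iff.mpr h
    obtain ⟨n, hn⟩ := exists_nat_gt ((K + ‖Ac‖ * R) / ‖Ac z‖)
    have := hbound n
    have hgt : K + ‖Ac‖ * R < (n : ℝ) * ‖Ac z‖ := by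
      rwa [div_lt_iff₀ hpos] at hn
    linarith
  have h := (hAc_apply z).symm.trans hzero
  exact sub_eq_zero.mp h
end
end

section
/- Let Λ₁, …, Λ_m be Delone sets in ℝ^d whose union is also Delone, let Q : ℝ^d → ℝ^d be an expanding linear map (every complex eigenvalue of Q has modulus > 1), and let D_{ij} ⊆ ℝ^d (i,j = 1,…,m) be finite sets such that for each i, Λ_i = ⋃_{j=1}^m (QΛ_j + D_{ij}), where the sets {QΛ_j + a : 1 ≤ j ≤ m, a ∈ D_{ij}} appearing in this union are pairwise disjoint. Let S be the m × m matrix with S_{ij} = #D_{ij}, assume S is primitive (some power of S has all entries strictly positive), and let λ > 0 be an eigenvalue of S admitting an eigenvector with all entries strictly positive (the Perron–Frobenius eigenvalue). Then λ = |det Q|. -/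
open scoped Pointwise

noncomputable section


open scoped Pointwise

noncomputable section

/-!
Count the points of `Λ i` in the region `c + Qⁿ(B(0, L))`. One level of the substitution writes
this count as the sum, over `j` and `a ∈ D i j`, of counts of `Λ j` in regions of level `n - 1`;
by induction on `n`, comparing with the positive eigenvector `v`, the count lies between constant
multiples of `λⁿ (L - R)^d` and `λⁿ (L + r)^d`. On the other hand, packing (uniform discreteness)
and covering (relative density) compare the same count with the volume `|det Q|ⁿ vol B(0, L)` of the
region, up to a thickening that does not depend on `L`. Letting `L → ∞` for fixed `n` gives
`λⁿ ≍ |det Q|ⁿ` with constants independent of `n`, hence `λ = |det Q|`.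
-/

open Filter Metric MeasureTheory Set Topology
open scoped ENNReal

theorem le_of_forall_mul_sub_pow_le_mul_add_pow {a f b e L₀ : ℝ} {d : ℕ}
    (h : ∀ L ≥ L₀, a * (L - b) ^ d ≤ f * (L + e) ^ d) : a ≤ f := by
  have hlim : ∀ s : ℝ, Tendsto (fun L : ℝ => ((L + s) / L) ^ d) atTop (𝓝 1) := fun s => by
    have := ((tendsto_const_nhds (x := (1 : ℝ))).add
      (tendsto_const_nhds (x := s).div_atTop tendsto_id)).pow d
    rw [add_zero, one_pow] at this
    refine this.congr' ?_
    filter_upwards [eventually_gt_atTop 0] with L hL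
    rw [id, add_div, div_self hL.ne']
  have := le_of_tendsto_of_tendsto ((hlim (-b)).const_mul a) ((hlim e).const_mul f) <| by
    filter_upwards [eventually_ge_atTop L₀, eventually_gt_atTop 0] with L hL hL0
    simp only [div_pow, ← mul_div_assoc, ← sub_eq_add_neg]
    exact div_le_div_of_nonneg_right (h L hL) (pow_nonneg hL0.le d)
  simpa using this

theorem le_of_forall_mul_pow_le_mul_pow {x y a b : ℝ} (hy : 0 < y) (ha : 0 < a)
    (h : ∀ n : ℕ, a * x ^ n ≤ b * y ^ n) : x ≤ y := by
  by_contra! hlt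
  obtain ⟨n, hn⟩ := pow_unbounded_of_one_lt (b / a) ((one_lt_div hy).2 hlt)
  refine hn.not_ge ?_
  rw [div_pow, div_le_div_iff₀ (pow_pos hy n) ha, mul_comm]
  exact h n

section Substitution

variable {E ι : Type*} [AddCommGroup E] [Fintype ι]

theorem ncard_inter_eq_sum_ncard_inter_preimage {Λ : ι → Set E} {f : E → E}
    (hf : Function.Injective f) {D : ι → ι → Finset E}
    (heq : ∀ i, Λ i = ⋃ j, ⋃ a ∈ D i j, (fun x => f x + a) '' Λ j)
    (hdisj : ∀ i, ∀ j j' : ι, ∀ a ∈ D i j, ∀ a' ∈ D i j', (j, a) ≠ (j', a') →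
      Disjoint ((fun x => f x + a) '' Λ j) ((fun x => f x + a') '' Λ j'))
    {i : ι} {A : Set E} (hfin : (Λ i ∩ A).Finite) :
    (Λ i ∩ A).ncard = ∑ j, ∑ a ∈ D i j, (Λ j ∩ (fun x => f x + a) ⁻¹' A).ncard := by
  have hinj : ∀ a : E, Function.Injective (fun x => f x + a) :=
    fun a x y hxy => hf (add_right_cancel hxy)
  have hpiece : ∀ j a, (fun x => f x + a) '' Λ j ∩ A =
      (fun x => f x + a) '' (Λ j ∩ (fun x => f x + a) ⁻¹' A) :=
    fun j a => (image_inter_preimage _ _ _).symm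
  have hencard : (Λ i ∩ A).encard =
      ∑ j, ∑ a ∈ D i j, (Λ j ∩ (fun x => f x + a) ⁻¹' A).encard := by
    rw [heq i, iUnion_inter, encard_iUnion_of_finite, finsum_eq_sum_of_fintype]
    · refine Finset.sum_congr rfl fun j _ => ?_
      rw [iUnion₂_inter, ← Finset.set_biUnion_coe, (D i j).finite_toSet.encard_biUnion,
        finsum_mem_coe_finset]
      · exact Finset.sum_congr rfl fun a _ => by rw [hpiece, (hinj a).encard_image]
      · exact fun a ha a' ha' hne => (hdisj i j j a ha a' ha' (by simpa using hne)).mono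
          inter_subset_left inter_subset_left
    · refine fun j j' hne => ?_
      simp only [Function.onFun, iUnion₂_inter, disjoint_iUnion₂_left, disjoint_iUnion₂_right]
      exact fun a' ha' a ha => (hdisj i j j' a ha a' ha' (by simp [hne])).mono
        inter_subset_left inter_subset_left
  have hfin_piece : ∀ j, ∀ a ∈ D i j, (Λ j ∩ (fun x => f x + a) ⁻¹' A).Finite := by
    refine fun j a ha => Finite.of_finite_image (hfin.subset ?_) (hinj a).injOn
    rw [← hpiece, heq i]
    exact inter_subset_inter_left A (subset_iUnion_of_subset j (subset_iUnion₂_of_subset a ha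
      subset_rfl))
  rw [← hfin.cast_ncard_eq] at hencard
  refine ENat.natCast_inj.1 (hencard.trans ?_)
  push_cast
  exact Finset.sum_congr rfl fun j _ => Finset.sum_congr rfl fun a ha =>
    (hfin_piece j a ha).cast_ncard_eq.symm

theorem preimage_add_vadd_image {F : Type*} [FunLike F E E] [AddMonoidHomClass F E E] {f : F}
    (hf : Function.Injective f) {a c z : E} (hz : f z = c - a) (K : Set E) :
    (fun x => f x + a) ⁻¹' (c +ᵥ f '' K) = z +ᵥ K := by
  ext x
  simp only [mem_preimage, mem_vadd_set, mem_image, vadd_eq_add, exists_exists_and_eq_and]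
  refine exists_congr fun y => and_congr_right fun _ => ?_
  rw [eq_sub_iff_add_eq] at hz
  rw [← hz, add_right_comm, ← map_add, add_left_inj, hf.eq_iff]

theorem ncard_inter_vadd_image_eq_sum {F : Type*} [FunLike F E E] [AddMonoidHomClass F E E]
    {f : F} (hf : Function.Injective f) {Λ : ι → Set E} {D : ι → ι → Finset E}
    (heq : ∀ i, Λ i = ⋃ j, ⋃ a ∈ D i j, (fun x => f x + a) '' Λ j)
    (hdisj : ∀ i, ∀ j j' : ι, ∀ a ∈ D i j, ∀ a' ∈ D i j', (j, a) ≠ (j', a') →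
      Disjoint ((fun x => f x + a) '' Λ j) ((fun x => f x + a') '' Λ j'))
    {i : ι} {c : E} {z : E → E} (hz : ∀ a, f (z a) = c - a) {K : Set E}
    (hfin : (Λ i ∩ (c +ᵥ f '' K)).Finite) :
    (Λ i ∩ (c +ᵥ f '' K)).ncard = ∑ j, ∑ a ∈ D i j, (Λ j ∩ (z a +ᵥ K)).ncard := by
  rw [ncard_inter_eq_sum_ncard_inter_preimage hf heq hdisj hfin]
  simp_rw [preimage_add_vadd_image hf (hz _)]

theorem bounds_of_sum_card_recursion {κ C : Type*} {D : ι → ι → Finset κ}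
    {S : Matrix ι ι ℝ} (hS : ∀ i j, S i j = (D i j).card) {v : ι → ℝ} {lam : ℝ}
    (heig : S.mulVec v = lam • v) {N : ℕ → ι → C → ℝ} {next : C → κ → C}
    (hN : ∀ n i c, N (n + 1) i c = ∑ j, ∑ a ∈ D i j, N n j (next c a)) {α β : ℝ}
    (h0 : ∀ i c, α * v i ≤ N 0 i c ∧ N 0 i c ≤ β * v i) (n : ℕ) (i : ι) (c : C) :
    α * lam ^ n * v i ≤ N n i c ∧ N n i c ≤ β * lam ^ n * v i := by
  have hsum : ∀ (γ : ℝ) n i, ∑ j, ∑ _a ∈ D i j, γ * lam ^ n * v j = γ * lam ^ (n + 1) * v i := by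
    intro γ n i
    have hrow : ∑ j, S i j * v j = lam * v i := by
      simpa [Matrix.mulVec, dotProduct] using congrFun heig i
    calc ∑ j, ∑ _a ∈ D i j, γ * lam ^ n * v j = γ * lam ^ n * ∑ j, S i j * v j := by
          simp only [Finset.sum_const, nsmul_eq_mul, hS, Finset.mul_sum]
          exact Finset.sum_congr rfl fun j _ => by ring
      _ = γ * lam ^ (n + 1) * v i := by rw [hrow]; ring
  induction n generalizing i c with
  | zero => simpa using h0 i c
  | succ n ih =>
    rw [hN, ← hsum α, ← hsum β]
    exact ⟨Finset.sum_le_sum fun j _ => Finset.sum_le_sum fun a _ => (ih j _).1,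
      Finset.sum_le_sum fun j _ => Finset.sum_le_sum fun a _ => (ih j _).2⟩

end Substitution

section LinearImage

variable {E : Type*} [NormedAddCommGroup E] [NormedSpace ℝ E] [FiniteDimensional ℝ E]

theorem isBounded_vadd_image_closedBall (g : E →ₗ[ℝ] E) (c : E) (L : ℝ) :
    Bornology.IsBounded (c +ᵥ g '' closedBall 0 L) :=
  (((isCompact_closedBall 0 L).image g.continuous_of_finiteDimensional).vadd c).isBounded

theorem LinearMap.exists_bounded_preimage_of_det_ne_zero {g : E →ₗ[ℝ] E}
    (hg : LinearMap.det g ≠ 0) : ∃ M, 0 ≤ M ∧ ∀ y, ∃ x, g x = y ∧ ‖x‖ ≤ M * ‖y‖ := by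
  set e := LinearMap.equivOfDetNeZero g hg
  refine ⟨‖LinearMap.toContinuousLinearMap (e.symm : E →ₗ[ℝ] E)‖, norm_nonneg _,
    fun y => ⟨e.symm y, e.apply_symm_apply y, ?_⟩⟩
  exact (LinearMap.toContinuousLinearMap (e.symm : E →ₗ[ℝ] E)).le_opNorm y

theorem cthickening_vadd_image_closedBall_subset {g : E →ₗ[ℝ] E} {M : ℝ} (hM0 : 0 ≤ M)
    (hM : ∀ y, ∃ x, g x = y ∧ ‖x‖ ≤ M * ‖y‖) (c : E) (L : ℝ) {ρ : ℝ} (hρ : 0 ≤ ρ) :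
    cthickening ρ (c +ᵥ g '' closedBall 0 L) ⊆ c +ᵥ g '' closedBall 0 (L + M * ρ) := by
  have hcpt : IsCompact (c +ᵥ g '' closedBall (0 : E) L) :=
    ((isCompact_closedBall 0 L).image g.continuous_of_finiteDimensional).vadd c
  rw [hcpt.cthickening_eq_biUnion_closedBall hρ]
  simp only [iUnion_subset_iff, mem_vadd_set, mem_image, mem_closedBall_zero_iff]
  rintro _ ⟨_, ⟨y, hy, rfl⟩, rfl⟩ w hw
  obtain ⟨u, hu, hu_le⟩ := hM (w - (c + g y))
  refine ⟨g (y + u), ⟨y + u, ?_, rfl⟩, ?_⟩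
  · have : ‖w - (c + g y)‖ ≤ ρ := by rwa [mem_closedBall, dist_eq_norm] at hw
    rw [mem_closedBall_zero_iff]
    calc ‖y + u‖ ≤ ‖y‖ + ‖u‖ := norm_add_le y u
      _ ≤ L + M * ρ := add_le_add hy (hu_le.trans (mul_le_mul_of_nonneg_left this hM0))
  · simp only [map_add, hu, vadd_eq_add]; abel

end LinearImage

section Delone

variable {d : ℕ}

local notation "𝔼" => EuclideanSpace ℝ (Fin d)

theorem UnifDiscrete.mono {X : Set 𝔼} {r r' : ℝ} (h : UnifDiscrete X r) (hr : r' ≤ r) :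
    UnifDiscrete X r' :=
  fun x hx y hy hxy => by linarith [h x hx y hy hxy]

theorem RelDense.mono {X : Set 𝔼} {R R' : ℝ} (h : RelDense X R) (hR : R ≤ R') :
    RelDense X R' :=
  fun z => let ⟨x, hx, hzx⟩ := h z; ⟨x, hx, hzx.trans hR⟩

theorem exists_forall_unifDiscrete_relDense {ι : Type*} [Finite ι] [Nonempty ι]
    {Λ : ι → Set 𝔼} (hΛ : ∀ i, IsDelone (Λ i)) :
    ∃ r > 0, ∃ R > 0, ∀ i, UnifDiscrete (Λ i) r ∧ RelDense (Λ i) R := by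
  choose r hr hrΛ using fun i => (hΛ i).1
  choose R hR hRΛ using fun i => (hΛ i).2
  obtain ⟨imin, hmin⟩ := Finite.exists_min r
  obtain ⟨imax, hmax⟩ := Finite.exists_max R
  exact ⟨r imin, hr imin, R imax, hR imax,
    fun i => ⟨(hrΛ i).mono (hmin i), (hRΛ i).mono (hmax i)⟩⟩

theorem UnifDiscrete.encard_inter_mul_volume_ball_le {X : Set 𝔼} {r : ℝ} (hX : UnifDiscrete X r)
    (A : Set 𝔼) : ((X ∩ A).encard : ℝ≥0∞) * volume (ball (0 : 𝔼) r) ≤ volume (thickening r A) :=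
  calc ((X ∩ A).encard : ℝ≥0∞) * volume (ball (0 : 𝔼) r)
      = ∑' x : ↥(X ∩ A), volume (ball (x : 𝔼) r) := by
        simp only [Measure.addHaar_ball_center, ENNReal.tsum_set_const]
    _ ≤ volume (⋃ x : ↥(X ∩ A), ball (x : 𝔼) r) :=
        tsum_meas_le_meas_iUnion_of_disjoint _ (fun _ => measurableSet_ball)
          fun x y hxy => ball_disjoint_ball <| by
            linarith [hX x x.2.1 y y.2.1 (Subtype.coe_injective.ne hxy)]
    _ ≤ volume (thickening r A) :=
        measure_mono <| iUnion_subset fun x => ball_subset_thickening x.2.2 r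

theorem UnifDiscrete.finite_inter_of_isBounded {X : Set 𝔼} {r : ℝ} (hX : UnifDiscrete X r)
    (hr : 0 < r) {A : Set 𝔼} (hA : Bornology.IsBounded A) : (X ∩ A).Finite := by
  refine encard_ne_top_iff.1 fun htop => ?_
  have h := hX.encard_inter_mul_volume_ball_le A
  rw [htop, ENat.toENNReal_top, ENNReal.top_mul (measure_ball_pos volume _ hr).ne',
    top_le_iff] at h
  exact hA.thickening.measure_lt_top.ne h

theorem RelDense.volume_le_encard_mul {X : Set 𝔼} {R : ℝ} (hX : RelDense X R) (hR : 0 < R)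
    (A : Set 𝔼) :
    volume A ≤ ((X ∩ cthickening R A).encard : ℝ≥0∞) * volume (closedBall (0 : 𝔼) R) := by
  by_cases hfin : (X ∩ cthickening R A).Finite
  · have hcover : A ⊆ ⋃ x ∈ X ∩ cthickening R A, closedBall x R := fun z hz => by
      obtain ⟨x, hx, hzx⟩ := hX z
      exact mem_biUnion ⟨hx, mem_cthickening_of_dist_le x z R A hz (dist_comm x z ▸ hzx)⟩
        (mem_closedBall.2 hzx)
    calc volume A ≤ volume (⋃ x ∈ X ∩ cthickening R A, closedBall x R) := measure_mono hcover
      _ ≤ ∑' x : ↥(X ∩ cthickening R A), volume (closedBall (x : 𝔼) R) :=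
          measure_biUnion_le _ hfin.countable _
      _ = _ := by simp only [Measure.addHaar_closedBall_center, ENNReal.tsum_set_const]
  · rw [Set.Infinite.encard_eq hfin, ENat.toENNReal_top,
      ENNReal.top_mul (measure_closedBall_pos volume _ hR).ne']
    exact le_top

theorem volume_vadd_image_closedBall (g : 𝔼 →ₗ[ℝ] 𝔼) (c : 𝔼) {L : ℝ} (hL : 0 ≤ L) :
    volume (c +ᵥ g '' closedBall 0 L) =
      ENNReal.ofReal (|LinearMap.det g| * L ^ d) * volume (ball (0 : 𝔼) 1) := by
  rw [measure_vadd, Measure.addHaar_image_linearMap, Measure.addHaar_closedBall _ _ hL,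
    finrank_euclideanSpace_fin, ← mul_assoc, ← ENNReal.ofReal_mul (abs_nonneg _)]

theorem UnifDiscrete.ncard_inter_vadd_image_closedBall_le {X : Set 𝔼} {r : ℝ}
    (hX : UnifDiscrete X r) (hr : 0 < r) {g : 𝔼 →ₗ[ℝ] 𝔼} {M : ℝ} (hM0 : 0 ≤ M)
    (hM : ∀ y, ∃ x, g x = y ∧ ‖x‖ ≤ M * ‖y‖) (c : 𝔼) {L : ℝ} (hL : 0 ≤ L) :
    ((X ∩ (c +ᵥ g '' closedBall 0 L)).ncard : ℝ) * r ^ d ≤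
      |LinearMap.det g| * (L + M * r) ^ d := by
  set A := c +ᵥ g '' closedBall 0 L
  have hfin : (X ∩ A).Finite :=
    hX.finite_inter_of_isBounded hr (isBounded_vadd_image_closedBall g c L)
  have h := (hX.encard_inter_mul_volume_ball_le A).trans <| measure_mono <|
    (thickening_subset_cthickening r A).trans
      (cthickening_vadd_image_closedBall_subset hM0 hM c L hr.le)
  rw [Measure.addHaar_ball_of_pos _ _ hr, finrank_euclideanSpace_fin,
    volume_vadd_image_closedBall g c (by positivity), ← hfin.cast_ncard_eq, ENat.toENNReal_coe,
    ← mul_assoc, ← ENNReal.ofReal_natCast, ← ENNReal.ofReal_mul (Nat.cast_nonneg _),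
    ENNReal.mul_le_mul_iff_left (measure_ball_pos volume _ one_pos).ne' measure_ball_lt_top.ne,
    ENNReal.ofReal_le_ofReal_iff (by positivity)] at h
  exact h

theorem RelDense.le_ncard_inter_vadd_image_closedBall {X : Set 𝔼} {R : ℝ}
    (hX : RelDense X R) (hR : 0 < R) {g : 𝔼 →ₗ[ℝ] 𝔼} {M : ℝ} (hM0 : 0 ≤ M)
    (hM : ∀ y, ∃ x, g x = y ∧ ‖x‖ ≤ M * ‖y‖) (c : 𝔼) {L : ℝ} (hL : M * R ≤ L)
    (hfin : (X ∩ (c +ᵥ g '' closedBall 0 L)).Finite) :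
    |LinearMap.det g| * (L - M * R) ^ d ≤
      ((X ∩ (c +ᵥ g '' closedBall 0 L)).ncard : ℝ) * R ^ d := by
  have hsub : cthickening R (c +ᵥ g '' closedBall 0 (L - M * R)) ⊆ c +ᵥ g '' closedBall 0 L := by
    simpa using cthickening_vadd_image_closedBall_subset hM0 hM c (L - M * R) hR.le
  have hmono : ((X ∩ cthickening R (c +ᵥ g '' closedBall 0 (L - M * R))).encard : ℝ≥0∞) ≤
      (X ∩ (c +ᵥ g '' closedBall 0 L)).encard := by
    gcongr
  have h := (hX.volume_le_encard_mul hR (c +ᵥ g '' closedBall 0 (L - M * R))).trans <|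
    mul_le_mul_left hmono _
  rw [volume_vadd_image_closedBall g c (by linarith), Measure.addHaar_closedBall _ _ hR.le,
    finrank_euclideanSpace_fin, ← hfin.cast_ncard_eq, ENat.toENNReal_coe, ← mul_assoc,
    ← ENNReal.ofReal_natCast, ← ENNReal.ofReal_mul (Nat.cast_nonneg _),
    ENNReal.mul_le_mul_iff_left (measure_ball_pos volume _ one_pos).ne' measure_ball_lt_top.ne,
    ENNReal.ofReal_le_ofReal_iff (by positivity)] at h
  exact h

theorem bounds_ncard_inter_closedBall {X : Set 𝔼} {r R : ℝ} (hr : 0 < r)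
    (hrX : UnifDiscrete X r) (hR : 0 < R) (hRX : RelDense X R) (c : 𝔼) {L : ℝ} (hL : R ≤ L) :
    (L - R) ^ d / R ^ d ≤ ((X ∩ closedBall c L).ncard : ℝ) ∧
      ((X ∩ closedBall c L).ncard : ℝ) ≤ (L + r) ^ d / r ^ d := by
  have hid : ∀ y : 𝔼, ∃ x, (LinearMap.id : 𝔼 →ₗ[ℝ] 𝔼) x = y ∧ ‖x‖ ≤ 1 * ‖y‖ :=
    fun y => ⟨y, rfl, by simp⟩
  have hball : c +ᵥ ⇑(LinearMap.id : 𝔼 →ₗ[ℝ] 𝔼) '' closedBall 0 L = closedBall c L := by simp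
  have hup := hrX.ncard_inter_vadd_image_closedBall_le hr zero_le_one hid c (hR.le.trans hL)
  have hlow := hRX.le_ncard_inter_vadd_image_closedBall hR zero_le_one hid c (by linarith)
    (hrX.finite_inter_of_isBounded hr (isBounded_vadd_image_closedBall _ c L))
  simp only [hball, LinearMap.det_id, abs_one, one_mul] at hup hlow
  exact ⟨(div_le_iff₀ (pow_pos hR d)).2 hlow, (le_div_iff₀ (pow_pos hr d)).2 hup⟩

theorem exists_bounds_ncard_inter_vadd_pow_image {X : Set 𝔼} {r R : ℝ} (hr : 0 < r)
    (hrX : UnifDiscrete X r) (hR : 0 < R) (hRX : RelDense X R) {Q : 𝔼 →ₗ[ℝ] 𝔼}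
    (hQ : LinearMap.det Q ≠ 0) (n : ℕ) :
    ∃ M, ∀ (c : 𝔼) (L : ℝ),
      (0 ≤ L → ((X ∩ (c +ᵥ ⇑(Q ^ n) '' closedBall 0 L)).ncard : ℝ) ≤
        (r ^ d)⁻¹ * |LinearMap.det Q| ^ n * (L + M * r) ^ d) ∧
      (M * R ≤ L → (R ^ d)⁻¹ * |LinearMap.det Q| ^ n * (L - M * R) ^ d ≤
        (X ∩ (c +ᵥ ⇑(Q ^ n) '' closedBall 0 L)).ncard) := by
  have hdet : LinearMap.det (Q ^ n) = LinearMap.det Q ^ n := map_pow _ _ _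
  obtain ⟨M, hM0, hM⟩ :=
    LinearMap.exists_bounded_preimage_of_det_ne_zero (hdet ▸ pow_ne_zero n hQ)
  refine ⟨M, fun c L => ⟨fun hL => ?_, fun hL => ?_⟩⟩
  · have h := hrX.ncard_inter_vadd_image_closedBall_le hr hM0 hM c hL
    rw [hdet, abs_pow, ← le_div_iff₀ (by positivity)] at h
    rwa [inv_mul_eq_div, div_mul_eq_mul_div]
  · have h := hRX.le_ncard_inter_vadd_image_closedBall hR hM0 hM c hL <|
      hrX.finite_inter_of_isBounded hr (isBounded_vadd_image_closedBall _ c L)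
    rw [hdet, abs_pow, ← div_le_iff₀ (by positivity)] at h
    rwa [inv_mul_eq_div, div_mul_eq_mul_div]

theorem exists_bounds_ncard_inter_vadd_pow_image_of_eigenvector {ι : Type*} [Fintype ι]
    {Λ : ι → Set 𝔼} {Q : 𝔼 →ₗ[ℝ] 𝔼} (hQ : LinearMap.det Q ≠ 0) {D : ι → ι → Finset 𝔼}
    (heq : ∀ i, Λ i = ⋃ j, ⋃ a ∈ D i j, (fun x => Q x + a) '' Λ j)
    (hdisj : ∀ i, ∀ j j' : ι, ∀ a ∈ D i j, ∀ a' ∈ D i j', (j, a) ≠ (j', a') →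
      Disjoint ((fun x => Q x + a) '' Λ j) ((fun x => Q x + a') '' Λ j'))
    {r R : ℝ} (hr : 0 < r) (hrΛ : ∀ i, UnifDiscrete (Λ i) r) (hR : 0 < R)
    (hRΛ : ∀ i, RelDense (Λ i) R) {S : Matrix ι ι ℝ} (hS : ∀ i j, S i j = (D i j).card)
    {v : ι → ℝ} (hv : ∀ i, 0 < v i) {lam : ℝ} (heig : S.mulVec v = lam • v) (i : ι) :
    ∃ a > 0, ∃ b, ∀ L ≥ R, ∀ (n : ℕ) (c : 𝔼),
      a * lam ^ n * (L - R) ^ d ≤ ((Λ i ∩ (c +ᵥ ⇑(Q ^ n) '' closedBall 0 L)).ncard : ℝ) ∧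
      ((Λ i ∩ (c +ᵥ ⇑(Q ^ n) '' closedBall 0 L)).ncard : ℝ) ≤ b * lam ^ n * (L + r) ^ d := by
  have : Nonempty ι := ⟨i⟩
  obtain ⟨imin, hmin⟩ := Finite.exists_min v
  obtain ⟨imax, hmax⟩ := Finite.exists_max v
  have hQinj : Function.Injective Q := (LinearMap.equivOfDetNeZero Q hQ).injective
  refine ⟨v i / (R ^ d * v imax), div_pos (hv i) (mul_pos (pow_pos hR d) (hv imax)),
    v i / (r ^ d * v imin), fun L hL n c => ?_⟩
  have hrec : ∀ (n : ℕ) j (c : 𝔼), ((Λ j ∩ (c +ᵥ ⇑(Q ^ (n + 1)) '' closedBall 0 L)).ncard : ℝ) =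
      ∑ k, ∑ a ∈ D j k,
        ((Λ k ∩ ((LinearMap.equivOfDetNeZero Q hQ).symm (c - a) +ᵥ
          ⇑(Q ^ n) '' closedBall 0 L)).ncard : ℝ) := by
    intro n j c
    have hfin := (hrΛ j).finite_inter_of_isBounded hr
      (isBounded_vadd_image_closedBall (Q ^ (n + 1)) c L)
    rw [pow_succ', Module.End.coe_mul, image_comp] at hfin ⊢
    exact_mod_cast ncard_inter_vadd_image_eq_sum hQinj heq hdisj
      (fun a => (LinearMap.equivOfDetNeZero Q hQ).apply_symm_apply (c - a)) hfin
  have hbase : ∀ j (c : 𝔼), (L - R) ^ d / R ^ d / v imax * v j ≤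
        ((Λ j ∩ (c +ᵥ ⇑(Q ^ 0) '' closedBall 0 L)).ncard : ℝ) ∧
      ((Λ j ∩ (c +ᵥ ⇑(Q ^ 0) '' closedBall 0 L)).ncard : ℝ) ≤
        (L + r) ^ d / r ^ d / v imin * v j := by
    intro j c
    obtain ⟨hlow, hup⟩ := bounds_ncard_inter_closedBall hr (hrΛ j) hR (hRΛ j) c hL
    simp only [pow_zero, Module.End.one_eq_id, LinearMap.id_coe, image_id, vadd_closedBall_zero]
    constructor
    · calc (L - R) ^ d / R ^ d / v imax * v j = (L - R) ^ d / R ^ d * (v j / v imax) := by ring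
        _ ≤ (L - R) ^ d / R ^ d := mul_le_of_le_one_right
            (div_nonneg (pow_nonneg (sub_nonneg.2 hL) d) (pow_nonneg hR.le d))
            ((div_le_one (hv imax)).2 (hmax j))
        _ ≤ _ := hlow
    · calc _ ≤ (L + r) ^ d / r ^ d := hup
        _ ≤ (L + r) ^ d / r ^ d * (v j / v imin) := le_mul_of_one_le_right
            (div_nonneg (pow_nonneg (by linarith) d) (pow_nonneg hr.le d))
            ((one_le_div (hv imin)).2 (hmin j))
        _ = (L + r) ^ d / r ^ d / v imin * v j := by ring
  obtain ⟨hlow, hup⟩ := bounds_of_sum_card_recursion hS heig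
    (N := fun n j c => ((Λ j ∩ (c +ᵥ ⇑(Q ^ n) '' closedBall 0 L)).ncard : ℝ)) hrec hbase n i c
  constructor
  · convert hlow using 1; ring
  · convert hup using 1; ring

end Delone

theorem pf_eigenvalue_eq_abs_det_general {d m : ℕ} (hm : 0 < m)
    (Λ : Fin m → Set (EuclideanSpace ℝ (Fin d)))
    (hΛ : ∀ i, IsDelone (Λ i))
    (Q : EuclideanSpace ℝ (Fin d) →ₗ[ℝ] EuclideanSpace ℝ (Fin d))
    (hQexp : ∀ z : ℂ, (Q.charpoly.map (algebraMap ℝ ℂ)).IsRoot z → 1 < ‖z‖)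
    (D : Fin m → Fin m → Finset (EuclideanSpace ℝ (Fin d)))
    (heq : ∀ i, Λ i = ⋃ j, ⋃ a ∈ D i j, (fun x => Q x + a) '' Λ j)
    (hdisj : ∀ i, ∀ j j' : Fin m, ∀ a ∈ D i j, ∀ a' ∈ D i j', (j, a) ≠ (j', a') →
      Disjoint ((fun x => Q x + a) '' Λ j) ((fun x => Q x + a') '' Λ j'))
    (S : Matrix (Fin m) (Fin m) ℝ) (hS : ∀ i j, S i j = (D i j).card)
    (lam : ℝ) (hlam : 0 < lam)
    (v : Fin m → ℝ) (hv : ∀ i, 0 < v i) (heig : S.mulVec v = lam • v) :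
    lam = |LinearMap.det Q| := by
  have hdet : LinearMap.det Q ≠ 0 := fun h => by
    have h0 := ((Module.End.hasEigenvalue_iff_isRoot_charpoly Q 0).1
      (((LinearMap.hasEigenvalue_zero_tfae Q).out 3 0).1 h)).map (f := algebraMap ℝ ℂ)
    exact absurd (hQexp 0 (by simpa using h0)) (by simp)
  let i : Fin m := ⟨0, hm⟩
  have : Nonempty (Fin m) := ⟨i⟩
  obtain ⟨r, hr, R, hR, hΛ'⟩ := exists_forall_unifDiscrete_relDense hΛ
  obtain ⟨a, ha, b, hab⟩ := exists_bounds_ncard_inter_vadd_pow_image_of_eigenvector hdet heq hdisj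
    hr (fun j => (hΛ' j).1) hR (fun j => (hΛ' j).2) hS hv heig i
  refine le_antisymm
    (le_of_forall_mul_pow_le_mul_pow (b := (r ^ d)⁻¹) (abs_pos.2 hdet) ha fun n => ?_)
    (le_of_forall_mul_pow_le_mul_pow (b := b) hlam (inv_pos.2 (pow_pos hR d)) fun n => ?_)
  all_goals obtain ⟨M, hM⟩ :=
    exists_bounds_ncard_inter_vadd_pow_image hr (hΛ' i).1 hR (hΛ' i).2 hdet n
  · exact le_of_forall_mul_sub_pow_le_mul_add_pow (L₀ := R) fun L hL =>
      (hab L hL n 0).1.trans ((hM 0 L).1 (hR.le.trans hL))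
  · exact le_of_forall_mul_sub_pow_le_mul_add_pow (L₀ := max (M * R) R) fun L hL =>
      ((hM 0 L).2 (le_of_max_le_left hL)).trans (hab L (le_of_max_le_right hL) n 0).2

/-- For a primitive substitution Delone `m`-set with expansion map `Q`, the Perron–Frobenius
eigenvalue of the substitution matrix `S` equals `|det Q|`. -/
theorem pf_eigenvalue_eq_abs_det {d m : ℕ} (hm : 0 < m)
    (Λ : Fin m → Set (EuclideanSpace ℝ (Fin d)))
    (hΛ : ∀ i, IsDelone (Λ i)) (hU : IsDelone (⋃ i, Λ i))
    (Q : EuclideanSpace ℝ (Fin d) →ₗ[ℝ] EuclideanSpace ℝ (Fin d))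
    (hQexp : ∀ z : ℂ, (Q.charpoly.map (algebraMap ℝ ℂ)).IsRoot z → 1 < ‖z‖)
    (D : Fin m → Fin m → Finset (EuclideanSpace ℝ (Fin d)))
    (heq : ∀ i, Λ i = ⋃ j, ⋃ a ∈ D i j, (fun x => Q x + a) '' Λ j)
    (hdisj : ∀ i, ∀ j j' : Fin m, ∀ a ∈ D i j, ∀ a' ∈ D i j', (j, a) ≠ (j', a') →
      Disjoint ((fun x => Q x + a) '' Λ j) ((fun x => Q x + a') '' Λ j'))
    (S : Matrix (Fin m) (Fin m) ℝ) (hS : ∀ i j, S i j = (D i j).card)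
    (hprim : ∃ n : ℕ, ∀ i j, 0 < (S ^ n) i j)
    (lam : ℝ) (hlam : 0 < lam)
    (v : Fin m → ℝ) (hv : ∀ i, 0 < v i) (heig : S.mulVec v = lam • v) :
    lam = |LinearMap.det Q| :=
  pf_eigenvalue_eq_abs_det_general hm Λ hΛ Q hQexp D heq hdisj S hS lam hlam v hv heig
end
end
end

section
/- Let β > 1 be a Pisot number of degree s with companion matrix M (of its minimal polynomial, viewed as a real s × s matrix). Then there exist a vector v ∈ ℝ^s with M v = β v and a constant C > 0 such that for every N ≥ 0 and every choice of integers a₀, …, a_N with 0 ≤ a_j ≤ ⌊β⌋ for all j, one has ‖ Σ_{j=0}^N a_j Mʲ e₁ − (Σ_{j=0}^N a_j βʲ) v ‖ ≤ C, where e₁ is the first standard basis vector of ℝ^s. (This expresses that the address map of the set of β-integers is almost linear, so that X_β is a Meyer set when β is Pisot.) -/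
/-!
Over `ℂ` the minimal polynomial `P` of `β` splits with simple roots, and the Lagrange
interpolation of `1` at these roots, `1 = ∑ γ, P / ((X - γ) P'(γ))`, read on coefficient vectors,
decomposes `e₁ = ∑ γ, v γ` into eigenvectors of the companion matrix `M` (which acts on coefficient
vectors as multiplication by `X` modulo `P`). Hence `∑ aⱼ Mʲ e₁ = ∑ γ, (∑ aⱼ γʲ) v γ`; removing the
term of `γ = β` leaves only conjugates with `‖γ‖ < 1`, for which `‖∑ aⱼ γʲ‖ ≤ ⌊β⌋ / (1 - ‖γ‖)`
by the geometric series, uniformly in the digits.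
-/

noncomputable section

/-- The `s × s` companion matrix (over `ℝ`) of a monic polynomial `p` of degree `s` with
rational coefficients: `1`'s on the subdiagonal, last column `(-c₀, …, -c_{s-1})ᵗ`. -/
def companionMatrix (s : ℕ) (p : Polynomial ℚ) : Matrix (Fin s) (Fin s) ℝ :=
  fun i j =>
    if (i : ℕ) = (j : ℕ) + 1 then 1
    else if (j : ℕ) = s - 1 then -((p.coeff (i : ℕ) : ℝ))
    else 0

open Polynomial Finset Matrix

namespace Polynomial

variable {R : Type*} [CommRing R]

def companion (s : ℕ) (P : R[X]) : Matrix (Fin s) (Fin s) R :=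
  fun i j =>
    if (i : ℕ) = (j : ℕ) + 1 then 1
    else if (j : ℕ) = s - 1 then -P.coeff i
    else 0

def coeffVec (s : ℕ) : R[X] →ₗ[R] Fin s → R := LinearMap.pi fun i => lcoeff R i

@[simp]
theorem coeffVec_apply {s : ℕ} (q : R[X]) (i : Fin s) : coeffVec s q i = q.coeff i := rfl

theorem companion_mulVec_coeffVec {s : ℕ} (P q : R[X]) :
    companion s P *ᵥ coeffVec s q = coeffVec s (X * q - C (q.coeff (s - 1)) * P) := by
  ext ⟨i, hi⟩
  let g : ℕ → R := fun j =>
    (if j + 1 = i then q.coeff j else 0) + (if j = s - 1 then -P.coeff i * q.coeff (s - 1) else 0)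
  have hentry : ∀ j : Fin s, companion s P ⟨i, hi⟩ j * q.coeff j = g j := by
    intro j
    simp only [companion, g]
    split_ifs <;> first | omega | ring1 | simp_all
  simp only [mulVec, dotProduct, coeffVec_apply, hentry, Fin.sum_univ_eq_sum_range g s, g,
    sum_add_distrib, coeff_sub, coeff_C_mul]
  have hs : s - 1 < s := by omega
  cases i with
  | zero => simp [hs, mul_comm]
  | succ k => simp [hs, show k < s by omega, mul_comm, sub_eq_add_neg]

theorem companion_mulVec_coeffVec_divByMonic [Nontrivial R] {s : ℕ} {P : R[X]} (hP : P.Monic)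
    (hdeg : P.natDegree = s) {γ : R} (hγ : P.IsRoot γ) :
    companion s P *ᵥ coeffVec s (P /ₘ (X - C γ)) = γ • coeffVec s (P /ₘ (X - C γ)) := by
  set q := P /ₘ (X - C γ)
  have hfac : (X - C γ) * q = P := mul_divByMonic_eq_iff_isRoot.2 hγ
  have hq : q.Monic := (monic_X_sub_C γ).of_mul_monic_left (hfac ▸ hP)
  have hlead : q.coeff (s - 1) = 1 := by
    have : P.natDegree = 1 + q.natDegree := by
      rw [← hfac, (monic_X_sub_C γ).natDegree_mul hq, natDegree_X_sub_C]
    rw [show s - 1 = q.natDegree by omega]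
    exact hq.coeff_natDegree
  rw [companion_mulVec_coeffVec, hlead, C_1, one_mul, ← hfac, ← sub_mul, sub_sub_cancel,
    ← smul_eq_C_mul, map_smul]

theorem companion_map {S : Type*} [CommRing S] (f : R →+* S) (s : ℕ) (P : R[X]) :
    (companion s P).map f = companion s (P.map f) := by
  ext i j
  simp only [companion, map_apply, coeff_map]
  split_ifs <;> simp

section Lagrange

variable {K : Type*} [Field K]

/-- The coefficient vector of the Lagrange basis polynomial `P / ((X - γ) P'(γ))` of the root `γ`
among the roots of `P`. -/
def lagrangeVec (s : ℕ) (P : K[X]) (γ : K) : Fin s → K :=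
  coeffVec s ((P.derivative.eval γ)⁻¹ • (P /ₘ (X - C γ)))

theorem companion_mulVec_lagrangeVec {s : ℕ} {P : K[X]} (hP : P.Monic) (hdeg : P.natDegree = s)
    {γ : K} (hγ : P.IsRoot γ) :
    companion s P *ᵥ lagrangeVec s P γ = γ • lagrangeVec s P γ := by
  rw [lagrangeVec, map_smul, mulVec_smul, companion_mulVec_coeffVec_divByMonic hP hdeg hγ,
    smul_comm]

theorem lagrangeVec_map {L : Type*} [Field L] (f : K →+* L) (s : ℕ) (P : K[X]) (γ : K) :
    lagrangeVec s (P.map f) (f γ) = f ∘ lagrangeVec s P γ := by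
  have hdiv : P.map f /ₘ (X - C (f γ)) = (P /ₘ (X - C γ)).map f := by
    simp [map_divByMonic f (monic_X_sub_C γ)]
  ext i
  simp [lagrangeVec, hdiv, derivative_map, eval_map, eval₂_at_apply]

variable [DecidableEq K]

theorem sum_inv_derivative_smul_divByMonic_roots {P : K[X]} (hP : P.Monic) (hsep : P.Separable)
    (hsplit : P.Splits) (hdeg : 0 < P.natDegree) :
    ∑ γ ∈ P.roots.toFinset, (P.derivative.eval γ)⁻¹ • (P /ₘ (X - C γ)) = 1 := by
  have hnodal : Lagrange.nodal P.roots.toFinset id = P := by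
    rw [Lagrange.nodal_eq, prod_eq_multiset_prod, Multiset.toFinset_val,
      (nodup_roots hsep).dedup]
    exact (hsplit.eq_prod_roots_of_monic hP).symm
  have hne : P.roots.toFinset.Nonempty := by
    rw [Multiset.toFinset_nonempty, ← Multiset.card_pos, ← hsplit.natDegree_eq_card_roots]
    exact hdeg
  rw [← Lagrange.sum_basis (Set.injOn_id _) hne]
  refine sum_congr rfl fun γ hγ => ?_
  rw [Lagrange.basis_eq_prod_sub_inv_mul_nodal_div hγ,
    Lagrange.nodalWeight_eq_eval_derivative_nodal hγ, hnodal, smul_eq_C_mul,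
    divByMonic_eq_div _ (monic_X_sub_C γ)]
  rfl

theorem sum_lagrangeVec_roots {s : ℕ} (hs : 0 < s) {P : K[X]} (hP : P.Monic)
    (hsep : P.Separable) (hsplit : P.Splits) (hdeg : P.natDegree = s) :
    ∑ γ ∈ P.roots.toFinset, lagrangeVec s P γ = Pi.single ⟨0, hs⟩ 1 := by
  simp only [lagrangeVec, ← map_sum,
    sum_inv_derivative_smul_divByMonic_roots hP hsep hsplit (hdeg ▸ hs)]
  ext i
  simp [coeff_one, Pi.single_apply, Fin.ext_iff]

end Lagrange

end Polynomial

theorem companionMatrix_eq_companion (s : ℕ) (p : ℚ[X]) :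
    companionMatrix s p = companion s (p.map (algebraMap ℚ ℝ)) := by
  ext i j
  simp [companionMatrix, companion]

namespace Matrix

variable {R : Type*} [CommRing R] {n : Type*} [Fintype n] [DecidableEq n]

theorem pow_mulVec_of_mulVec_eq_smul {A : Matrix n n R} {w : n → R} {γ : R}
    (hw : A *ᵥ w = γ • w) (j : ℕ) : A ^ j *ᵥ w = γ ^ j • w := by
  induction j with
  | zero => simp
  | succ k ih => rw [pow_succ, ← mulVec_mulVec, hw, mulVec_smul, ih, smul_smul, pow_succ']

theorem sum_smul_pow_mulVec_sum_eq {A : Matrix n n R} {S : Finset R} {w : R → n → R}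
    (hw : ∀ γ ∈ S, A *ᵥ w γ = γ • w γ) (c : ℕ → R) (N : ℕ) :
    ∑ j ∈ range N, c j • (A ^ j *ᵥ ∑ γ ∈ S, w γ) =
      ∑ γ ∈ S, (∑ j ∈ range N, c j * γ ^ j) • w γ := by
  simp only [mulVec_sum, smul_sum, sum_smul]
  rw [sum_comm]
  refine sum_congr rfl fun γ hγ => sum_congr rfl fun j _ => ?_
  rw [pow_mulVec_of_mulVec_eq_smul (hw γ hγ), smul_smul]

end Matrix

section Bound

variable {𝕜 : Type*} [NormedField 𝕜] {n : Type*} [Fintype n] [DecidableEq n]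

theorem norm_sum_mul_pow_le {γ : 𝕜} (hγ : ‖γ‖ < 1) {B : ℝ} (hB : 0 ≤ B) {N : ℕ} {c : ℕ → 𝕜}
    (hc : ∀ j < N, ‖c j‖ ≤ B) : ‖∑ j ∈ range N, c j * γ ^ j‖ ≤ B * (1 - ‖γ‖)⁻¹ :=
  calc ‖∑ j ∈ range N, c j * γ ^ j‖
      ≤ ∑ j ∈ range N, B * ‖γ‖ ^ j := by
        refine (norm_sum_le _ _).trans (sum_le_sum fun j hj => ?_)
        rw [norm_mul, norm_pow]
        gcongr
        exact hc j (mem_range.1 hj)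
    _ = B * ∑ j ∈ range N, ‖γ‖ ^ j := (mul_sum ..).symm
    _ ≤ B * (1 - ‖γ‖)⁻¹ := by
        gcongr
        exact sum_le_hasSum _ (fun j _ => by positivity)
          (hasSum_geometric_of_lt_one (norm_nonneg γ) hγ)

theorem norm_sum_smul_pow_mulVec_sub_le [DecidableEq 𝕜] {A : Matrix n n 𝕜} {S : Finset 𝕜}
    {w : 𝕜 → n → 𝕜} (hw : ∀ γ ∈ S, A *ᵥ w γ = γ • w γ) {b : 𝕜} (hb : b ∈ S)
    (hS : ∀ γ ∈ S.erase b, ‖γ‖ < 1)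
    {B : ℝ} (hB : 0 ≤ B) {N : ℕ} {c : ℕ → 𝕜} (hc : ∀ j < N, ‖c j‖ ≤ B) :
    ‖∑ j ∈ range N, c j • (A ^ j *ᵥ ∑ γ ∈ S, w γ) - (∑ j ∈ range N, c j * b ^ j) • w b‖ ≤
      ∑ γ ∈ S.erase b, B * (1 - ‖γ‖)⁻¹ * ‖w γ‖ := by
  rw [Matrix.sum_smul_pow_mulVec_sum_eq hw, ← add_sum_erase S _ hb, add_sub_cancel_left]
  refine (norm_sum_le _ _).trans (sum_le_sum fun γ hγ => ?_)
  rw [norm_smul]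
  gcongr
  exact norm_sum_mul_pow_le (hS γ hγ) hB hc

end Bound

theorem Complex.norm_ofReal_comp {n : Type*} [Fintype n] (x : n → ℝ) :
    ‖Complex.ofReal ∘ x‖ = ‖x‖ := by
  simp [Pi.norm_def, Complex.nnnorm_real]

theorem norm_sum_smul_pow_mulVec_sub_le_of_complexification {n : Type*} [Fintype n]
    [DecidableEq n] {A : Matrix n n ℝ} {e v : n → ℝ} {S : Finset ℂ} {w : ℂ → n → ℂ}
    (hw : ∀ γ ∈ S, A.map Complex.ofReal *ᵥ w γ = γ • w γ)
    (he : ∑ γ ∈ S, w γ = Complex.ofReal ∘ e) {b : ℝ} (hb : (b : ℂ) ∈ S)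
    (hv : w b = Complex.ofReal ∘ v) (hS : ∀ γ ∈ S.erase (b : ℂ), ‖γ‖ < 1) {B : ℝ} (hB : 0 ≤ B)
    {N : ℕ} {c : ℕ → ℝ} (hc : ∀ j < N, |c j| ≤ B) :
    ‖∑ j ∈ range N, c j • (A ^ j *ᵥ e) - (∑ j ∈ range N, c j * b ^ j) • v‖ ≤
      ∑ γ ∈ S.erase (b : ℂ), B * (1 - ‖γ‖)⁻¹ * ‖w γ‖ := by
  have hcomplex : Complex.ofReal ∘ (∑ j ∈ range N, c j • (A ^ j *ᵥ e) -
        (∑ j ∈ range N, c j * b ^ j) • v) =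
      ∑ j ∈ range N, (c j : ℂ) • ((A.map Complex.ofReal) ^ j *ᵥ ∑ γ ∈ S, w γ) -
        (∑ j ∈ range N, (c j : ℂ) * (b : ℂ) ^ j) • w b := by
    have hpow : ∀ j i, (((A ^ j *ᵥ e) i : ℝ) : ℂ) =
        ((A.map Complex.ofReal) ^ j *ᵥ Complex.ofReal ∘ e) i := fun j i => by
      have h := RingHom.map_mulVec Complex.ofRealHom (A ^ j) e i
      rwa [Matrix.map_pow] at h
    rw [he, hv]
    ext i
    simp [hpow]
  rw [← Complex.norm_ofReal_comp, hcomplex]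
  exact norm_sum_smul_pow_mulVec_sub_le hw hb hS hB (by simpa using hc)

theorem exists_norm_sum_smul_pow_companion_mulVec_sub_le {s : ℕ} (hs : 0 < s) {Q : ℝ[X]}
    (hQ : Q.Monic) (hsep : Q.Separable) (hdeg : Q.natDegree = s) {b : ℝ} (hb : Q.IsRoot b)
    (hsmall : ∀ γ : ℂ, (Q.map (algebraMap ℝ ℂ)).IsRoot γ → γ ≠ b → ‖γ‖ < 1) {B : ℝ}
    (hB : 0 ≤ B) :
    ∃ C, ∀ N (c : ℕ → ℝ), (∀ j < N, |c j| ≤ B) →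
      ‖∑ j ∈ range N, c j • (companion s Q ^ j *ᵥ Pi.single ⟨0, hs⟩ 1) -
        (∑ j ∈ range N, c j * b ^ j) • lagrangeVec s Q b‖ ≤ C := by
  set P := Q.map (algebraMap ℝ ℂ)
  have hP : P.Monic := hQ.map _
  have hPdeg : P.natDegree = s := by rw [natDegree_map, hdeg]
  have hmem : ∀ γ, γ ∈ P.roots.toFinset ↔ P.IsRoot γ := fun γ => by
    rw [Multiset.mem_toFinset, mem_roots hP.ne_zero]
  have hM : (companion s Q).map Complex.ofReal = companion s P := by
    rw [← Complex.coe_algebraMap, companion_map]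
  have he : ∑ γ ∈ P.roots.toFinset, lagrangeVec s P γ = Complex.ofReal ∘ Pi.single ⟨0, hs⟩ 1 := by
    rw [sum_lagrangeVec_roots hs hP hsep.map (IsAlgClosed.splits P) hPdeg]
    ext i
    simp [Pi.single_apply, apply_ite Complex.ofReal]
  have hbP : (b : ℂ) ∈ P.roots.toFinset := by
    rw [hmem, ← Complex.coe_algebraMap]
    exact hb.map
  refine ⟨_, fun N c hc => norm_sum_smul_pow_mulVec_sub_le_of_complexification
    (fun γ hγ => ?_) he hbP (by rw [← Complex.coe_algebraMap, ← lagrangeVec_map]) (fun γ hγ => ?_)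
    hB hc⟩
  · rw [hM]
    exact companion_mulVec_lagrangeVec hP hPdeg ((hmem γ).1 hγ)
  · exact hsmall γ ((hmem γ).1 (mem_of_mem_erase hγ)) (ne_of_mem_erase hγ)

theorem pisot_beta_integers_address_almost_linear_general (s : ℕ) (hs : 0 < s) (β : ℝ)
    (hdeg : (minpoly ℚ β).natDegree = s)
    (hPisot : ∀ γ : ℂ, Polynomial.aeval γ (minpoly ℚ β) = 0 → γ ≠ (β : ℂ) →
      ‖γ‖ < 1) :
    ∃ v : Fin s → ℝ, (companionMatrix s (minpoly ℚ β)).mulVec v = β • v ∧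
      ∃ C > 0, ∀ N : ℕ, ∀ a : ℕ → ℤ, (∀ j ≤ N, 0 ≤ a j ∧ a j ≤ ⌊β⌋) →
        ‖(∑ j ∈ Finset.range (N + 1),
            (a j : ℝ) • ((companionMatrix s (minpoly ℚ β)) ^ j).mulVec (Pi.single ⟨0, hs⟩ 1)) -
          (∑ j ∈ Finset.range (N + 1), (a j : ℝ) * β ^ j) • v‖ ≤ C := by
  set p := minpoly ℚ β
  have hβ : IsIntegral ℚ β := minpoly.ne_zero_iff.1 fun h => by simp [p, h] at hdeg; omega
  set Q := p.map (algebraMap ℚ ℝ)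
  have hQ : Q.Monic := (minpoly.monic hβ).map _
  have hQdeg : Q.natDegree = s := by rw [natDegree_map, hdeg]
  have hroot : Q.IsRoot β := by rw [IsRoot, eval_map, ← aeval_def, minpoly.aeval]
  have hsmall : ∀ γ : ℂ, (Q.map (algebraMap ℝ ℂ)).IsRoot γ → γ ≠ β → ‖γ‖ < 1 := fun γ hγ => by
    rw [IsRoot, Polynomial.map_map, ← IsScalarTower.algebraMap_eq, eval_map, ← aeval_def] at hγ
    exact hPisot γ hγ
  obtain ⟨C, hC⟩ := exists_norm_sum_smul_pow_companion_mulVec_sub_le hs hQ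
    (minpoly.irreducible hβ).separable.map hQdeg hroot hsmall (abs_nonneg (⌊β⌋ : ℝ))
  rw [companionMatrix_eq_companion]
  refine ⟨lagrangeVec s Q β, companion_mulVec_lagrangeVec hQ hQdeg hroot, max C 1, by positivity,
    fun N a ha => (hC (N + 1) _ fun j hj => ?_).trans (le_max_left _ _)⟩
  obtain ⟨h0, hle⟩ := ha j (Nat.lt_succ_iff.1 hj)
  exact abs_le_abs_of_nonneg (by exact_mod_cast h0) (by exact_mod_cast hle)

/-- For a Pisot number `β` of degree `s` with companion matrix `M`, there are an eigenvector
`v` with `Mv = βv` and a constant `C > 0` bounding uniformly the distance between the address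
`Σ aⱼ Mʲe₁` of any greedy-type digit expansion and `(Σ aⱼ βʲ)·v`: the address map of the set of
`β`-integers is almost linear, hence `X_β` is Meyer for Pisot `β`. -/
theorem pisot_beta_integers_address_almost_linear (s : ℕ) (hs : 0 < s) (β : ℝ) (hβ : 1 < β)
    (hint : IsIntegral ℤ β) (hdeg : (minpoly ℚ β).natDegree = s)
    (hPisot : ∀ γ : ℂ, Polynomial.aeval γ (minpoly ℚ β) = 0 → γ ≠ (β : ℂ) →
      ‖γ‖ < 1) :
    ∃ v : Fin s → ℝ, (companionMatrix s (minpoly ℚ β)).mulVec v = β • v ∧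
      ∃ C > 0, ∀ N : ℕ, ∀ a : ℕ → ℤ, (∀ j ≤ N, 0 ≤ a j ∧ a j ≤ ⌊β⌋) →
        ‖(∑ j ∈ Finset.range (N + 1),
            (a j : ℝ) • ((companionMatrix s (minpoly ℚ β)) ^ j).mulVec (Pi.single ⟨0, hs⟩ 1)) -
          (∑ j ∈ Finset.range (N + 1), (a j : ℝ) * β ^ j) • v‖ ≤ C :=
  pisot_beta_integers_address_almost_linear_general s hs β hdeg hPisot
end
end

section
/- Let β be a Salem number of degree s ≥ 4 with minimal polynomial μ over ℚ, and define X_β = { p(β) : p ∈ ℤ[x] and |p(γ)| < 1 for every complex root γ of μ with γ ≠ β }. Then: (1) β·X_β ⊆ X_β, and (2) X_β − X_β is uniformly discrete; more precisely, every nonzero element of (X_β − X_β) − (X_β − X_β) has absolute value > 4^{1−s}, so in particular any two distinct elements of X_β − X_β are at distance > 4^{1−s}. -/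
open scoped Pointwise

noncomputable section

/-- The set `X_β` of real numbers of the form `p(β)`, `p ∈ ℤ[x]`, such that `|p(γ)| < 1` for
every conjugate `γ ≠ β` of `β`. -/
def salemSet (β : ℝ) : Set ℝ :=
  {x | ∃ p : Polynomial ℤ, x = Polynomial.aeval β p ∧
    ∀ γ : ℂ, Polynomial.aeval γ (minpoly ℚ β) = 0 → γ ≠ (β : ℂ) →
      ‖Polynomial.aeval γ p‖ < 1}

open Polynomial IntermediateField Finset

/-!
Multiplying `p` by `X` preserves the defining bound of `X_β`, since every conjugate `γ ≠ β` has
`|γ| ≤ 1`. An element `z` of `(X_β − X_β) − (X_β − X_β)` is `q(β)` with `q ∈ ℤ[x]` and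
`|q(γ)| < 4` at each of the `s − 1` conjugates `γ ≠ β`. If `z ≠ 0`, the norm of the algebraic
integer `q(β)` from `ℚ(β)` to `ℚ` is a nonzero integer, so
`1 ≤ |z| · ∏_{γ ≠ β} |q(γ)| < |z| · 4^{s−1}`.
-/

theorem inv_pow_card_lt_of_one_le_mul_prod {ι : Type*} {s : Finset ι} (hs : s.Nonempty)
    {f : ι → ℝ} {a C : ℝ} (hf₀ : ∀ i ∈ s, 0 ≤ f i) (hfC : ∀ i ∈ s, f i < C)
    (h : 1 ≤ a * ∏ i ∈ s, f i) : (C ^ s.card)⁻¹ < a := by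
  have hprod_ne : ∏ i ∈ s, f i ≠ 0 := by
    rintro h0
    rw [h0, mul_zero] at h
    exact absurd h zero_lt_one.not_ge
  have hf_pos : ∀ i ∈ s, 0 < f i := fun i hi =>
    (hf₀ i hi).lt_of_ne (prod_ne_zero_iff.mp hprod_ne i hi).symm
  have hprod_lt : ∏ i ∈ s, f i < C ^ s.card := by
    simpa only [prod_const] using prod_lt_prod_of_nonempty hf_pos hfC hs
  have hprod_pos : 0 < ∏ i ∈ s, f i := prod_pos hf_pos
  have ha : 0 < a := pos_of_mul_pos_left (one_pos.trans_le h) hprod_pos.le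
  rw [inv_lt_iff_one_lt_mul₀ (hprod_pos.trans hprod_lt)]
  calc 1 ≤ a * ∏ i ∈ s, f i := h
    _ < a * C ^ s.card := mul_lt_mul_of_pos_left hprod_lt ha

theorem one_le_prod_norm_embeddings {K : Type*} [Field K] [Algebra ℚ K] [FiniteDimensional ℚ K]
    {x : K} (hx : IsIntegral ℤ x) (hx₀ : x ≠ 0) : 1 ≤ ∏ σ : K →ₐ[ℚ] ℂ, ‖σ x‖ := by
  obtain ⟨n, hn⟩ := IsIntegrallyClosed.isIntegral_iff.mp (Algebra.isIntegral_norm ℚ hx)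
  have hn₀ : n ≠ 0 := by
    rintro rfl
    exact Algebra.norm_ne_zero_iff.mpr hx₀ (by rw [← hn, map_zero])
  rw [← norm_prod, ← Algebra.norm_eq_prod_embeddings, ← hn, eq_intCast, map_intCast,
    Complex.norm_intCast]
  exact_mod_cast Int.one_le_abs hn₀

theorem isIntegral_aeval {R A : Type*} [CommRing R] [CommRing A] [Algebra R A] {a : A}
    (ha : IsIntegral R a) (p : R[X]) : IsIntegral R (aeval a p) := by
  simpa only [aeval_subalgebra_coe, mem_integralClosure_iff] using
    (aeval (⟨a, ha⟩ : integralClosure R A) p).2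

section AdjoinSimple

variable {F E K : Type*} [Field F] [Field E] [Algebra F E] [Field K] [Algebra F K]

theorem aeval_algHom_adjoinSimple_gen (α : E) (σ : F⟮α⟯ →ₐ[F] K) :
    aeval (σ (AdjoinSimple.gen F α)) (minpoly F α) = 0 := by
  rw [← minpoly_gen F α, aeval_algHom_apply]
  exact (congrArg σ (minpoly.aeval F _)).trans (map_zero σ)

theorem algHom_adjoinSimple_gen_injective (α : E) :
    Function.Injective fun σ : F⟮α⟯ →ₐ[F] K => σ (AdjoinSimple.gen F α) := by
  intro σ τ h
  refine adjoin_algHom_ext F fun y hy => ?_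
  obtain rfl : y = α := hy
  exact h

end AdjoinSimple

theorem inv_pow_lt_abs_aeval_of_norm_aeval_conj_lt {β : ℝ} (hβ : IsIntegral ℤ β)
    (hdeg : 2 ≤ (minpoly ℚ β).natDegree) {C : ℝ} {q : ℤ[X]}
    (hq : ∀ γ : ℂ, aeval γ (minpoly ℚ β) = 0 → γ ≠ (β : ℂ) → ‖aeval γ q‖ < C)
    (hq₀ : aeval β q ≠ 0) : (C ^ ((minpoly ℚ β).natDegree - 1))⁻¹ < |aeval β q| := by
  classical
  have hβℚ : IsIntegral ℚ β := hβ.tower_top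
  have := adjoin.finiteDimensional hβℚ
  set b := AdjoinSimple.gen ℚ β
  set x : ℚ⟮β⟯ := aeval b q
  let σ₀ : ℚ⟮β⟯ →ₐ[ℚ] ℂ := (Complex.ofRealAm.restrictScalars ℚ).comp (ℚ⟮β⟯).val
  have hx_real : algebraMap ℚ⟮β⟯ ℝ x = aeval β q := by
    rw [← aeval_algebraMap_apply, AdjoinSimple.algebraMap_gen]
  have hσ₀x : σ₀ x = (aeval β q : ℝ) := congrArg Complex.ofReal hx_real
  have hx₀ : x ≠ 0 := fun h => hq₀ (by rw [← hx_real, h, map_zero])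
  have hx : IsIntegral ℤ x := by
    refine isIntegral_aeval ?_ q
    rwa [← isIntegral_algebraMap_iff (algebraMap ℚ⟮β⟯ ℝ).injective, AdjoinSimple.algebraMap_gen]
  have hconj : ∀ σ ∈ univ.erase σ₀, ‖σ x‖ < C := by
    intro σ hσ
    rw [show σ x = aeval (σ b) q from (aeval_algHom_apply σ.toRingHom.toIntAlgHom b q).symm]
    exact hq _ (aeval_algHom_adjoinSimple_gen β σ)
      fun hσb => ne_of_mem_erase hσ (algHom_adjoinSimple_gen_injective β hσb)
  have hcard : #(univ.erase σ₀) = (minpoly ℚ β).natDegree - 1 := by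
    rw [card_erase_of_mem (mem_univ σ₀), card_univ, AlgHom.card, adjoin.finrank hβℚ]
  have hprod := one_le_prod_norm_embeddings hx hx₀
  rw [← mul_prod_erase univ _ (mem_univ σ₀), hσ₀x, Complex.norm_real, Real.norm_eq_abs] at hprod
  rw [← hcard]
  exact inv_pow_card_lt_of_one_le_mul_prod (by rw [← card_pos, hcard]; omega)
    (fun σ _ => norm_nonneg _) hconj hprod

theorem mul_mem_salemSet {β x : ℝ}
    (hconj : ∀ γ : ℂ, aeval γ (minpoly ℚ β) = 0 → γ ≠ (β : ℂ) → ‖γ‖ ≤ 1)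
    (hx : x ∈ salemSet β) : β * x ∈ salemSet β := by
  obtain ⟨p, rfl, hp⟩ := hx
  refine ⟨X * p, by simp, fun γ hγ hγβ => ?_⟩
  rw [map_mul, norm_mul, aeval_X]
  calc ‖γ‖ * ‖aeval γ p‖ ≤ 1 * ‖aeval γ p‖ := by gcongr; exact hconj γ hγ hγβ
    _ < 1 := by rw [one_mul]; exact hp γ hγ hγβ

theorem exists_aeval_eq_of_mem_salemSet_sub_sub {β z : ℝ}
    (hz : z ∈ (salemSet β - salemSet β) - (salemSet β - salemSet β)) :
    ∃ q : ℤ[X], z = aeval β q ∧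
      ∀ γ : ℂ, aeval γ (minpoly ℚ β) = 0 → γ ≠ (β : ℂ) → ‖aeval γ q‖ < 4 := by
  obtain ⟨_, ⟨_, ⟨p₁, rfl, hp₁⟩, _, ⟨p₂, rfl, hp₂⟩, rfl⟩,
    _, ⟨_, ⟨p₃, rfl, hp₃⟩, _, ⟨p₄, rfl, hp₄⟩, rfl⟩, rfl⟩ := hz
  refine ⟨p₁ - p₂ - (p₃ - p₄), by simp, fun γ hγ hγβ => ?_⟩
  simp only [map_sub]
  calc _ ≤ ‖aeval γ p₁ - aeval γ p₂‖ + ‖aeval γ p₃ - aeval γ p₄‖ := norm_sub_le _ _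
    _ ≤ ‖aeval γ p₁‖ + ‖aeval γ p₂‖ + (‖aeval γ p₃‖ + ‖aeval γ p₄‖) :=
      add_le_add (norm_sub_le _ _) (norm_sub_le _ _)
    _ < 4 := by linarith [hp₁ γ hγ hγβ, hp₂ γ hγ hγβ, hp₃ γ hγ hγβ, hp₄ γ hγ hγβ]

theorem inv_pow_lt_abs_of_mem_salemSet_sub_sub {β z : ℝ} (hβ : IsIntegral ℤ β)
    (hdeg : 2 ≤ (minpoly ℚ β).natDegree)
    (hz : z ∈ (salemSet β - salemSet β) - (salemSet β - salemSet β)) (hz₀ : z ≠ 0) :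
    ((4 : ℝ) ^ ((minpoly ℚ β).natDegree - 1))⁻¹ < |z| := by
  obtain ⟨q, rfl, hq⟩ := exists_aeval_eq_of_mem_salemSet_sub_sub hz
  exact inv_pow_lt_abs_aeval_of_norm_aeval_conj_lt hβ hdeg hq hz₀

theorem salemSet_inflation_and_meyer_general (s : ℕ) (hs : 4 ≤ s) (β : ℝ)
    (hint : IsIntegral ℤ β) (hdeg : (minpoly ℚ β).natDegree = s)
    (hSalem₁ : ∀ γ : ℂ, Polynomial.aeval γ (minpoly ℚ β) = 0 → γ ≠ (β : ℂ) →
      ‖γ‖ ≤ 1) :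
    (∀ x ∈ salemSet β, β * x ∈ salemSet β) ∧
    (∀ z ∈ (salemSet β - salemSet β) - (salemSet β - salemSet β), z ≠ 0 →
      (4 : ℝ) ^ ((1 : ℤ) - s) < |z|) ∧
    (∀ u ∈ salemSet β - salemSet β, ∀ w ∈ salemSet β - salemSet β, u ≠ w →
      (4 : ℝ) ^ ((1 : ℤ) - s) < |u - w|) := by
  have hpow : (4 : ℝ) ^ ((1 : ℤ) - s) = (4 ^ (s - 1))⁻¹ := by
    rw [show (1 : ℤ) - s = -((s - 1 : ℕ) : ℤ) by omega, zpow_neg, zpow_natCast]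
  have hsep : ∀ z ∈ (salemSet β - salemSet β) - (salemSet β - salemSet β), z ≠ 0 →
      (4 : ℝ) ^ ((1 : ℤ) - s) < |z| := fun z hz hz₀ => by
    rw [hpow, ← hdeg]
    exact inv_pow_lt_abs_of_mem_salemSet_sub_sub hint (by omega) hz hz₀
  exact ⟨fun x => mul_mem_salemSet hSalem₁, hsep,
    fun u hu w hw huw => hsep _ (Set.sub_mem_sub hu hw) (sub_ne_zero_of_ne huw)⟩

/-- For a Salem number `β` of degree `s ≥ 4`, the set `X_β` satisfies `βX_β ⊆ X_β` and
`X_β − X_β` is uniformly discrete: every nonzero element of `(X_β − X_β) − (X_β − X_β)` has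
absolute value `> 4^{1−s}`; in particular distinct elements of `X_β − X_β` are at distance
`> 4^{1−s}`. -/
theorem salemSet_inflation_and_meyer (s : ℕ) (hs : 4 ≤ s) (β : ℝ) (hβ : 1 < β)
    (hint : IsIntegral ℤ β) (hdeg : (minpoly ℚ β).natDegree = s)
    (hSalem₁ : ∀ γ : ℂ, Polynomial.aeval γ (minpoly ℚ β) = 0 → γ ≠ (β : ℂ) →
      ‖γ‖ ≤ 1)
    (hSalem₂ : ∃ γ : ℂ, Polynomial.aeval γ (minpoly ℚ β) = 0 ∧ ‖γ‖ = 1) :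
    (∀ x ∈ salemSet β, β * x ∈ salemSet β) ∧
    (∀ z ∈ (salemSet β - salemSet β) - (salemSet β - salemSet β), z ≠ 0 →
      (4 : ℝ) ^ ((1 : ℤ) - s) < |z|) ∧
    (∀ u ∈ salemSet β - salemSet β, ∀ w ∈ salemSet β - salemSet β, u ≠ w →
      (4 : ℝ) ^ ((1 : ℤ) - s) < |u - w|) :=
  salemSet_inflation_and_meyer_general s hs β hint hdeg hSalem₁
end
end

section
/- Let λ₁, …, λ_r be distinct complex algebraic numbers with |λ_i| ≥ 1 for i = 1, …, r, and let P₁, …, P_r be nonzero polynomials with complex coefficients. Suppose that Σ_{i=1}^r P_i(n) λ_iⁿ is a real number for every n ∈ ℕ, and that ‖Σ_{i=1}^r P_i(n) λ_iⁿ‖ → 0 as n → ∞, where ‖t‖ denotes the distance from the real number t to the nearest integer. Then {λ₁, …, λ_r} is a Pisot family: for every i and every complex root γ of the minimal polynomial of λ_i over ℚ, if γ ∉ {λ₁, …, λ_r} then |γ| < 1. -/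
/-!
Let `aₙ` be the integer nearest to `xₙ = ∑ Pᵢ(n) λᵢⁿ` and `E` the shift of sequences. Since the
`λᵢ` are algebraic, some nonzero rational `q` has `q(E) x = 0`; then `q(E) a = -q(E) (x - a)` is a
sequence with bounded denominators tending to `0`, hence eventually `0`. Let `g` be such a `q` of
minimal degree. Exponential polynomials with distinct bases of modulus `≥ 1` tend to `0` only if
they vanish identically; applied to `g(E) x = g(E) (x - a) + g(E) a` this makes every `λᵢ` a root
of `g`, hence so is every conjugate `γ`. If `|γ| ≥ 1` and `γ ∉ {λᵢ}`, write `g = (X - γ) s`: then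
`s(E) a` is eventually geometric of ratio `γ`, and the same uniqueness forces it to vanish. So `a`
eventually satisfies a complex recurrence of order `< deg g`, hence, by linear algebra over `ℚ`, a
rational one, contradicting minimality.
-/

noncomputable section

open Polynomial Filter Finset Topology

theorem LinearMap.funLeft_add_one_pow_apply {R : Type*} [Semiring R] (k : ℕ) (f : ℕ → R)
    (n : ℕ) : (LinearMap.funLeft R R (· + 1) ^ k) f n = f (n + k) := by
  induction k generalizing f with
  | zero => rfl
  | succ k ih => rw [pow_succ, Module.End.mul_apply, ih]; rfl

theorem exists_eventually_eq_mul_pow {K : Type*} [Field K] {b : ℕ → K} {γ : K} (hγ : γ ≠ 0)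
    (h : ∀ᶠ n in atTop, b (n + 1) = γ * b n) : ∃ c, ∀ᶠ n in atTop, b n = c * γ ^ n := by
  obtain ⟨N, hN⟩ := eventually_atTop.mp h
  refine ⟨b N / γ ^ N, eventually_atTop.mpr ⟨N, fun n hn => ?_⟩⟩
  induction n, hn using Nat.le_induction with
  | base => field_simp
  | succ n hn ih => rw [hN n hn, ih, pow_succ]; ring

theorem exists_ne_zero_forall_dotProduct_eq_zero {K L ι D : Type*} [Field K] [Field L]
    [Algebra K L] [Fintype D] [DecidableEq D] (w : ι → D → K) {c : D → L} (hc : c ≠ 0)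
    (h : ∀ i, (algebraMap K L ∘ w i) ⬝ᵥ c = 0) : ∃ f : D → K, f ≠ 0 ∧ ∀ i, w i ⬝ᵥ f = 0 := by
  have hspan : Submodule.span K (Set.range w) ≠ ⊤ := by
    intro htop
    refine hc (funext fun k => ?_)
    have hker : Submodule.span K (Set.range w) ≤ LinearMap.ker (Fintype.linearCombination K c) :=
      Submodule.span_le.mpr <| Set.range_subset_iff.mpr fun i => by
        simpa [Fintype.linearCombination_apply, Algebra.smul_def, dotProduct] using h i
    simpa [Fintype.linearCombination_apply_single] using
      hker (htop ▸ Submodule.mem_top : Pi.single k (1 : K) ∈ _)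
  obtain ⟨φ, hφ0, hφ⟩ := (Submodule.span K (Set.range w)).exists_le_ker_of_lt_top hspan.lt_top
  have hφ_eq : ∀ v, φ v = v ⬝ᵥ fun k => φ (Pi.single k 1) := fun v => by
    conv_lhs => rw [pi_eq_sum_univ' v]
    simp [dotProduct]
  refine ⟨fun k => φ (Pi.single k 1), fun h0 => hφ0 (LinearMap.ext fun v => ?_), fun i => ?_⟩
  · rw [hφ_eq, h0, dotProduct_zero, LinearMap.zero_apply]
  · rw [← hφ_eq]
    exact hφ (Submodule.subset_span ⟨i, rfl⟩)

theorem algebraMap_comp_intCast_comp (a : ℕ → ℤ) :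
    (algebraMap ℚ ℂ ∘ fun n => (a n : ℚ)) = fun n => (a n : ℂ) := by
  funext n; simp

theorem tendsto_sub_intCast_round {z : ℕ → ℂ} (him : ∀ n, (z n).im = 0)
    (h : Tendsto (fun n => |(z n).re - round (z n).re|) atTop (𝓝 0)) :
    Tendsto (z - fun n => ((round (z n).re : ℤ) : ℂ)) atTop (𝓝 0) := by
  refine tendsto_zero_iff_norm_tendsto_zero.mpr (h.congr fun n => ?_)
  have hz : z n = ((z n).re : ℂ) := Complex.ext rfl (by simp [him n])
  rw [Pi.sub_apply, hz, Complex.ofReal_re, ← Complex.ofReal_intCast, ← Complex.ofReal_sub,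
    Complex.norm_real, Real.norm_eq_abs]

namespace Polynomial

section Shift

variable {R : Type*} [CommSemiring R]

def evalShift (p : R[X]) : Module.End R (ℕ → R) :=
  aeval (LinearMap.funLeft R R (· + 1)) p

/-- `f` eventually satisfies the linear recurrence with characteristic polynomial `p`. -/
def AnnihilatesEventually (p : R[X]) (f : ℕ → R) : Prop :=
  ∀ᶠ n in atTop, p.evalShift f n = 0

theorem evalShift_apply_of_natDegree_lt {p : R[X]} {D : ℕ} (hD : p.natDegree < D)
    (f : ℕ → R) (n : ℕ) : p.evalShift f n = ∑ k ∈ range D, p.coeff k * f (n + k) := by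
  simp only [evalShift, aeval_eq_sum_range' hD, LinearMap.sum_apply, Finset.sum_apply,
    LinearMap.smul_apply, Pi.smul_apply, LinearMap.funLeft_add_one_pow_apply, smul_eq_mul]

theorem evalShift_apply (p : R[X]) (f : ℕ → R) (n : ℕ) :
    p.evalShift f n = ∑ k ∈ range (p.natDegree + 1), p.coeff k * f (n + k) :=
  evalShift_apply_of_natDegree_lt p.natDegree.lt_succ_self f n

theorem evalShift_mul (p q : R[X]) (f : ℕ → R) :
    (p * q).evalShift f = p.evalShift (q.evalShift f) := by
  rw [evalShift, map_mul]; rfl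

theorem evalShift_map {S : Type*} [CommSemiring S] (φ : R →+* S) (p : R[X]) (f : ℕ → R) :
    (p.map φ).evalShift (φ ∘ f) = φ ∘ p.evalShift f := by
  funext n
  rw [evalShift_apply_of_natDegree_lt ((natDegree_map_le).trans_lt p.natDegree.lt_succ_self),
    Function.comp_apply, evalShift_apply, map_sum]
  simp only [coeff_map, Function.comp_apply, map_mul]

theorem AnnihilatesEventually.map {S : Type*} [CommSemiring S] (φ : R →+* S) {p : R[X]}
    {f : ℕ → R} (h : p.AnnihilatesEventually f) : (p.map φ).AnnihilatesEventually (φ ∘ f) := by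
  filter_upwards [h] with n hn
  rw [evalShift_map, Function.comp_apply, hn, map_zero]

theorem tendsto_evalShift [TopologicalSpace R] [IsTopologicalSemiring R] (p : R[X])
    {f : ℕ → R} (hf : Tendsto f atTop (𝓝 0)) : Tendsto (p.evalShift f) atTop (𝓝 0) := by
  have h : Tendsto (fun n => ∑ k ∈ range (p.natDegree + 1), p.coeff k * f (n + k))
      atTop (𝓝 (∑ k ∈ range (p.natDegree + 1), p.coeff k * 0)) :=
    tendsto_finsetSum _ fun k _ => (hf.comp (tendsto_add_atTop_nat k)).const_mul _
  simp only [mul_zero, sum_const_zero] at h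
  exact h.congr fun n => (evalShift_apply p f n).symm

end Shift

section ExpSeq

variable {R : Type*} [CommRing R]

def expSeq (P : R[X]) (a : R) : ℕ → R := fun n => P.eval (n : R) * a ^ n

def evalShiftExp (p : R[X]) (a : R) (P : R[X]) : R[X] :=
  ∑ k ∈ range (p.natDegree + 1), C (p.coeff k * a ^ k) * taylor (k : R) P

theorem evalShift_expSeq (p : R[X]) (a : R) (P : R[X]) :
    p.evalShift (P.expSeq a) = (p.evalShiftExp a P).expSeq a := by
  funext n
  simp only [evalShift_apply, expSeq, evalShiftExp, eval_finsetSum, sum_mul, eval_mul, eval_C,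
    taylor_eval, Nat.cast_add, pow_add]
  exact sum_congr rfl fun k _ => by ring

theorem expSeq_C (c a : R) : (C c).expSeq a = fun n => c * a ^ n := by
  funext n; simp [expSeq]

theorem coeff_evalShiftExp_natDegree (p : R[X]) (a : R) (P : R[X]) :
    (p.evalShiftExp a P).coeff P.natDegree = p.eval a * P.leadingCoeff := by
  simp only [evalShiftExp, finsetSum_coeff, coeff_C_mul, coeff_taylor_natDegree,
    eval_eq_sum_range, sum_mul]

theorem evalShiftExp_ne_zero [IsDomain R] {p P : R[X]} {a : R} (hp : p.eval a ≠ 0)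
    (hP : P ≠ 0) : p.evalShiftExp a P ≠ 0 := fun h => by
  simpa [coeff_evalShiftExp_natDegree, hp, hP] using congr_arg (coeff · P.natDegree) h

theorem evalShift_X_sub_C (a : R) (f : ℕ → R) (n : ℕ) :
    (X - C a).evalShift f n = f (n + 1) - a * f n := by
  simp only [evalShift, map_sub, aeval_X, aeval_C, LinearMap.sub_apply, Pi.sub_apply,
    Module.algebraMap_end_apply, Pi.smul_apply, smul_eq_mul, LinearMap.funLeft_apply]

theorem evalShift_X_sub_C_expSeq (a : R) (P : R[X]) :
    (X - C a).evalShift (P.expSeq a) = (a • (taylor 1 P - P)).expSeq a := by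
  funext n
  simp only [evalShift_X_sub_C, expSeq, eval_smul, eval_sub, taylor_eval, Nat.cast_succ,
    smul_eq_mul]
  ring

theorem degree_taylor_sub_lt {P : R[X]} (hP : P ≠ 0) (r : R) :
    (taylor r P - P).degree < P.degree :=
  degree_taylor P r ▸ degree_sub_lt_left (degree_taylor P r)
    ((taylor_eq_zero r P).not.mpr hP) (leadingCoeff_taylor r P)

theorem evalShift_X_sub_C_pow_expSeq (a : R) {d : ℕ} {P : R[X]} (hP : P.degree < d) :
    ((X - C a) ^ d).evalShift (P.expSeq a) = 0 := by
  induction d generalizing P with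
  | zero =>
    obtain rfl : P = 0 := by simpa using hP
    funext n; simp [expSeq, evalShift]
  | succ d ih =>
    rw [pow_succ, evalShift_mul, evalShift_X_sub_C_expSeq]
    refine ih ((degree_smul_le _ _).trans_lt ?_)
    by_cases h0 : P = 0
    · simp [h0]
    · exact (degree_taylor_sub_lt h0 1).trans_le (Order.le_of_lt_succ hP)

theorem evalShift_expSeq_eq_zero {p : R[X]} {a : R} {P : R[X]}
    (h : (X - C a) ^ (P.natDegree + 1) ∣ p) : p.evalShift (P.expSeq a) = 0 := by
  obtain ⟨s, rfl⟩ := h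
  rw [mul_comm, evalShift_mul, evalShift_X_sub_C_pow_expSeq a
    (degree_le_natDegree.trans_lt (WithBot.coe_lt_coe.mpr P.natDegree.lt_succ_self)), map_zero]

end ExpSeq

theorem eq_zero_of_tendsto_eval_natCast {Q : ℂ[X]}
    (h : Tendsto (fun n : ℕ => Q.eval (n : ℂ)) atTop (𝓝 0)) : Q = 0 := by
  by_cases hdeg : 0 < Q.degree
  · have hnorm := Q.tendsto_norm_atTop hdeg (z := fun n : ℕ => (n : ℂ))
      (by simpa using tendsto_natCast_atTop_atTop)
    exact absurd (tendsto_norm_zero.comp h) (not_tendsto_atTop_of_tendsto_nhds · hnorm)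
  · rw [eq_C_of_degree_le_zero (not_lt.mp hdeg)] at h ⊢
    simpa using h

theorem eq_zero_of_tendsto_expSeq {Q : ℂ[X]} {μ : ℂ} (hμ : 1 ≤ ‖μ‖)
    (h : Tendsto (Q.expSeq μ) atTop (𝓝 0)) : Q = 0 := by
  refine eq_zero_of_tendsto_eval_natCast
    (squeeze_zero_norm (fun n => ?_) (tendsto_norm_zero.comp h))
  simpa [expSeq, norm_mul] using le_mul_of_one_le_right (norm_nonneg _) (one_le_pow₀ hμ (n := n))

theorem eq_zero_of_tendsto_sum_expSeq {ι : Type*} [Fintype ι] {μ : ι → ℂ}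
    (hμ : Function.Injective μ) (hμ1 : ∀ j, 1 ≤ ‖μ j‖) {S : ι → ℂ[X]}
    (h : Tendsto (∑ j, (S j).expSeq (μ j)) atTop (𝓝 0)) (j : ι) : S j = 0 := by
  classical
  by_contra hS
  -- `p(E)` kills every term but the `j`-th, on which it acts invertibly.
  set p := ∏ k ∈ univ.erase j, (X - C (μ k)) ^ ((S k).natDegree + 1)
  have hp : p.eval (μ j) ≠ 0 := by
    simp only [p, eval_prod, eval_pow, eval_sub, eval_X, eval_C]
    exact prod_ne_zero_iff.mpr fun k hk =>
      pow_ne_zero _ (sub_ne_zero.mpr (hμ.ne (ne_of_mem_erase hk).symm))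
  have hsum : p.evalShift (∑ k, (S k).expSeq (μ k))
      = (p.evalShiftExp (μ j) (S j)).expSeq (μ j) := by
    refine (map_sum _ _ _).trans ?_
    rw [sum_eq_single j (fun k _ hk => evalShift_expSeq_eq_zero
      (dvd_prod_of_mem (fun k => (X - C (μ k)) ^ ((S k).natDegree + 1))
        (mem_erase.mpr ⟨hk, mem_univ k⟩))) (by simp), evalShift_expSeq]
  exact evalShiftExp_ne_zero hp hS
    (eq_zero_of_tendsto_expSeq (hμ1 j) (hsum ▸ tendsto_evalShift p h))

theorem AnnihilatesEventually.exists_of_map {K L : Type*} [Field K] [Field L]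
    [Algebra K L] {a : ℕ → K} {p : L[X]} (hp0 : p ≠ 0)
    (hp : p.AnnihilatesEventually (algebraMap K L ∘ a)) :
    ∃ q : K[X], q ≠ 0 ∧ q.natDegree ≤ p.natDegree ∧ q.AnnihilatesEventually a := by
  obtain ⟨N, hN⟩ := eventually_atTop.mp hp
  set D := p.natDegree + 1
  obtain ⟨f, hf0, hf⟩ := exists_ne_zero_forall_dotProduct_eq_zero
    (fun n (k : Fin D) => a (N + n + k)) (c := fun k => p.coeff k)
    (fun h0 => hp0 (leadingCoeff_eq_zero.mp (congr_fun h0 ⟨_, p.natDegree.lt_succ_self⟩)))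
    (fun m => by
      simpa [evalShift_apply, sum_range, dotProduct, mul_comm] using hN (N + m) le_self_add)
  set q := ((degreeLTEquiv K D).symm f : K[X])
  have hq_coeff (k : Fin D) : q.coeff k = f k :=
    congr_fun ((degreeLTEquiv K D).apply_symm_apply f) k
  have hq_deg : q.natDegree ≤ p.natDegree := by
    have hq : q ∈ degreeLE K p.natDegree :=
      (degreeLT_succ_eq_degreeLE (R := K)) ▸ ((degreeLTEquiv K D).symm f).2
    exact natDegree_le_of_degree_le (mem_degreeLE.mp hq)
  have hq0 : q ≠ 0 := fun h0 => hf0 <| by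
    ext k
    rw [← hq_coeff, h0, coeff_zero, Pi.zero_apply]
  refine ⟨q, hq0, hq_deg, eventually_atTop.mpr ⟨N, fun n hn => ?_⟩⟩
  obtain ⟨m, rfl⟩ := Nat.exists_eq_add_of_le hn
  rw [evalShift_apply_of_natDegree_lt (Nat.lt_succ_of_le hq_deg), sum_range]
  simpa [dotProduct, hq_coeff, mul_comm] using hf m

theorem annihilatesEventually_of_tendsto {q : ℚ[X]} {a : ℕ → ℤ}
    (h : Tendsto ((q.map (algebraMap ℚ ℂ)).evalShift fun n => (a n : ℂ)) atTop (𝓝 0)) :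
    q.AnnihilatesEventually fun n => (a n : ℚ) := by
  obtain ⟨b, hb, hqb⟩ := IsLocalization.integerNormalization_spec (nonZeroDivisors ℤ) q
  set q' := IsLocalization.integerNormalization (nonZeroDivisors ℤ) q
  set s := q.evalShift fun n => (a n : ℚ)
  have hs : (q.map (algebraMap ℚ ℂ)).evalShift (fun n => (a n : ℂ)) = fun n => (s n : ℂ) := by
    rw [← algebraMap_comp_intCast_comp, evalShift_map]; rfl
  -- `b • q` has integer coefficients, so `b • s` is an integer sequence.
  have hint (n : ℕ) : ((q'.evalShift a n : ℤ) : ℚ) = b * s n := by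
    have := congr_fun (evalShift_map (algebraMap ℤ ℚ) q' a) n
    rw [hqb, evalShift, map_zsmul, Function.comp_apply, algebraMap_int_eq, eq_intCast] at this
    rw [← this, LinearMap.smul_apply, Pi.smul_apply, zsmul_eq_mul]
    rfl
  have hz : ∀ᶠ n in atTop, q'.evalShift a n = 0 := by
    have := (hs ▸ h).const_mul (b : ℂ)
    rw [mul_zero] at this
    filter_upwards [this.eventually (Metric.ball_mem_nhds 0 one_pos)] with n hn
    rw [dist_zero_right, ← Rat.cast_intCast, ← Rat.cast_mul, ← hint, Rat.cast_intCast,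
      Complex.norm_intCast] at hn
    exact Int.abs_lt_one_iff.mp (by exact_mod_cast hn)
  filter_upwards [hz] with n hn
  have hb0 : (b : ℚ) ≠ 0 := Int.cast_ne_zero.mpr (nonZeroDivisors.ne_zero hb)
  simpa [hn, hb0] using hint n

section Pisot

variable {ι : Type*} [Fintype ι] {lam : ι → ℂ} {P : ι → ℂ[X]} {a : ℕ → ℤ}

theorem tendsto_evalShift_sum_expSeq_sub
    (hx : Tendsto (∑ i, (P i).expSeq (lam i) - fun n => (a n : ℂ)) atTop (𝓝 0)) (p : ℂ[X]) :
    Tendsto (∑ i, p.evalShift ((P i).expSeq (lam i)) - p.evalShift fun n => (a n : ℂ))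
      atTop (𝓝 0) := by
  simpa only [map_sub, map_sum] using tendsto_evalShift p hx

theorem exists_annihilatesEventually (halg : ∀ i, IsAlgebraic ℚ (lam i))
    (hx : Tendsto (∑ i, (P i).expSeq (lam i) - fun n => (a n : ℂ)) atTop (𝓝 0)) :
    ∃ q : ℚ[X], q ≠ 0 ∧ q.AnnihilatesEventually fun n => (a n : ℚ) := by
  set q := ∏ i, minpoly ℚ (lam i) ^ ((P i).natDegree + 1)
  have hdvd (i : ι) : (X - C (lam i)) ^ ((P i).natDegree + 1) ∣ q.map (algebraMap ℚ ℂ) := by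
    have hroot : X - C (lam i) ∣ (minpoly ℚ (lam i)).map (algebraMap ℚ ℂ) := by
      rw [dvd_iff_isRoot, IsRoot, eval_map_algebraMap, minpoly.aeval]
    have hfactor :=
      dvd_prod_of_mem (fun j => minpoly ℚ (lam j) ^ ((P j).natDegree + 1)) (mem_univ i)
    exact (pow_dvd_pow_of_dvd hroot _).trans
      (by simpa using Polynomial.map_dvd (algebraMap ℚ ℂ) hfactor)
  refine ⟨q, prod_ne_zero_iff.mpr fun i _ => pow_ne_zero _ (minpoly.ne_zero (halg i).isIntegral),
    annihilatesEventually_of_tendsto ?_⟩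
  have h := (tendsto_evalShift_sum_expSeq_sub hx (q.map (algebraMap ℚ ℂ))).neg
  rw [sum_eq_zero fun i _ => evalShift_expSeq_eq_zero (hdvd i), zero_sub] at h
  simpa using h

theorem aeval_eq_zero_of_annihilatesEventually (hinj : Function.Injective lam)
    (hmod : ∀ i, 1 ≤ ‖lam i‖) (hP : ∀ i, P i ≠ 0)
    (hx : Tendsto (∑ i, (P i).expSeq (lam i) - fun n => (a n : ℂ)) atTop (𝓝 0)) {q : ℚ[X]}
    (hq : q.AnnihilatesEventually fun n => (a n : ℚ)) (i : ι) : aeval (lam i) q = 0 := by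
  have hp := algebraMap_comp_intCast_comp a ▸ hq.map (algebraMap ℚ ℂ)
  have ht : Tendsto (∑ i, ((q.map (algebraMap ℚ ℂ)).evalShiftExp (lam i) (P i)).expSeq (lam i))
      atTop (𝓝 0) := by
    refine (tendsto_evalShift_sum_expSeq_sub hx (q.map (algebraMap ℚ ℂ))).congr' ?_
    filter_upwards [hp] with n hn
    simp [hn, evalShift_expSeq]
  by_contra h
  exact evalShiftExp_ne_zero (by rwa [eval_map_algebraMap]) (hP i)
    (eq_zero_of_tendsto_sum_expSeq hinj hmod ht i)

theorem AnnihilatesEventually.of_X_sub_C_mul (hinj : Function.Injective lam)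
    (hmod : ∀ i, 1 ≤ ‖lam i‖)
    (hx : Tendsto (∑ i, (P i).expSeq (lam i) - fun n => (a n : ℂ)) atTop (𝓝 0)) {γ : ℂ}
    (hγ : γ ∉ Set.range lam) (hγ1 : 1 ≤ ‖γ‖) {s : ℂ[X]}
    (hs : ((X - C γ) * s).AnnihilatesEventually fun n => (a n : ℂ)) :
    s.AnnihilatesEventually fun n => (a n : ℂ) := by
  obtain ⟨c, hc⟩ := exists_eventually_eq_mul_pow (γ := γ) (b := s.evalShift fun n => (a n : ℂ))
    (norm_pos_iff.mp (one_pos.trans_le hγ1)) (by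
      filter_upwards [hs] with n hn
      rwa [evalShift_mul, evalShift_X_sub_C, sub_eq_zero] at hn)
  -- `s(E) a = c γⁿ` is one more exponential term, of base `γ`; uniqueness forces `c = 0`.
  set μ : Option ι → ℂ := fun o => o.elim γ lam
  set S : Option ι → ℂ[X] := fun o => o.elim (C (-c)) fun i => s.evalShiftExp (lam i) (P i)
  have ht : Tendsto (∑ o, (S o).expSeq (μ o)) atTop (𝓝 0) := by
    refine (tendsto_evalShift_sum_expSeq_sub hx s).congr' ?_
    filter_upwards [hc] with n hn
    simp only [Pi.sub_apply, Finset.sum_apply, Fintype.sum_option, S, μ, Option.elim,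
      evalShift_expSeq, expSeq_C, hn]
    ring
  have hμ : Function.Injective μ :=
    Option.injective_iff.mpr ⟨hinj, by simpa [μ] using hγ⟩
  have hc0 := eq_zero_of_tendsto_sum_expSeq hμ (Option.forall.mpr ⟨hγ1, hmod⟩) ht none
  filter_upwards [hc] with n hn
  rw [hn, show c = 0 by simpa [S] using hc0, zero_mul]

end Pisot

end Polynomial

theorem pisot_family_of_tendsto_general (r : ℕ) (lam : Fin r → ℂ)
    (hinj : Function.Injective lam)
    (halg : ∀ i, IsAlgebraic ℚ (lam i))
    (hmod : ∀ i, 1 ≤ ‖lam i‖)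
    (P : Fin r → Polynomial ℂ) (hP : ∀ i, P i ≠ 0)
    (hreal : ∀ n : ℕ, (∑ i, (P i).eval (n : ℂ) * lam i ^ n).im = 0)
    (hconv : Filter.Tendsto
      (fun n : ℕ =>
        |(∑ i, (P i).eval (n : ℂ) * lam i ^ n).re -
          (round ((∑ i, (P i).eval (n : ℂ) * lam i ^ n).re) : ℝ)|)
      Filter.atTop (nhds 0)) :
    ∀ i, ∀ γ : ℂ, Polynomial.aeval γ (minpoly ℚ (lam i)) = 0 →
      γ ∉ Set.range lam → ‖γ‖ < 1 := by
  intro i γ hγ hγlam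
  by_contra! hγ1
  set a := fun n : ℕ => round (∑ i, (P i).eval (n : ℂ) * lam i ^ n).re
  have hx : Tendsto (∑ i, (P i).expSeq (lam i) - fun n => (a n : ℂ)) atTop (𝓝 0) := by
    rw [Finset.sum_fn]
    exact tendsto_sub_intCast_round hreal hconv
  obtain ⟨g, ⟨hg0, hg⟩, hgmin⟩ := (measure natDegree).wf.has_min
    {q : ℚ[X] | q ≠ 0 ∧ q.AnnihilatesEventually fun n => (a n : ℚ)}
    (exists_annihilatesEventually halg hx)
  have hγg : (g.map (algebraMap ℚ ℂ)).IsRoot γ := by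
    obtain ⟨t, ht⟩ := minpoly.dvd ℚ (lam i)
      (aeval_eq_zero_of_annihilatesEventually hinj hmod hP hx hg i)
    rw [IsRoot, eval_map_algebraMap, ht, map_mul, hγ, zero_mul]
  obtain ⟨s, hs⟩ := dvd_iff_isRoot.mpr hγg
  have hs0 : s ≠ 0 := by
    rintro rfl
    exact hg0 (by simpa using hs)
  have hsdeg : s.natDegree < g.natDegree := by
    have := congr_arg natDegree hs
    rw [natDegree_map, natDegree_mul (X_sub_C_ne_zero γ) hs0, natDegree_X_sub_C] at this
    omega
  have hsa := (hs ▸ algebraMap_comp_intCast_comp a ▸ hg.map (algebraMap ℚ ℂ)).of_X_sub_C_mul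
    hinj hmod hx hγlam hγ1
  obtain ⟨q, hq0, hqdeg, hq⟩ := ((algebraMap_comp_intCast_comp a).symm ▸ hsa).exists_of_map hs0
  exact hgmin q ⟨hq0, hq⟩ (hqdeg.trans_lt hsdeg)

/-- Generalized Pisot theorem (Körnerup–Mauduit): if `λ₁,…,λ_r` are distinct algebraic numbers
of modulus `≥ 1`, `P₁,…,P_r` are nonzero complex polynomials, `Σ Pᵢ(n)λᵢⁿ` is real for all `n`
and its distance to the nearest integer tends to `0`, then `{λ₁,…,λ_r}` is a Pisot family. -/
theorem pisot_family_of_tendsto (r : ℕ) (hr : 0 < r) (lam : Fin r → ℂ)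
    (hinj : Function.Injective lam)
    (halg : ∀ i, IsAlgebraic ℚ (lam i))
    (hmod : ∀ i, 1 ≤ ‖lam i‖)
    (P : Fin r → Polynomial ℂ) (hP : ∀ i, P i ≠ 0)
    (hreal : ∀ n : ℕ, (∑ i, (P i).eval (n : ℂ) * lam i ^ n).im = 0)
    (hconv : Filter.Tendsto
      (fun n : ℕ =>
        |(∑ i, (P i).eval (n : ℂ) * lam i ^ n).re -
          (round ((∑ i, (P i).eval (n : ℂ) * lam i ^ n).re) : ℝ)|)
      Filter.atTop (nhds 0)) :
    ∀ i, ∀ γ : ℂ, Polynomial.aeval γ (minpoly ℚ (lam i)) = 0 →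
      γ ∉ Set.range lam → ‖γ‖ < 1 :=
  pisot_family_of_tendsto_general r lam hinj halg hmod P hP hreal hconv
end
end

section
/- For every real algebraic integer η > 1 there exists a Delone set X ⊆ ℝ such that the additive subgroup generated by X is finitely generated (indeed X ⊆ ℤ[η], which is a finitely generated ℤ-module) and ηX ⊆ X. -/
/-!
The positive half `P` of `X` is a union of blocks `B k ⊆ [η ^ k, η ^ (k + 1) - δ]`, where
`δ = gap η = min (η - 1) 1`: `B 0` consists of the integers in its range, and `B (k + 1)` of
`η • B k` together with the integers in its range at distance at least `1` from `η • B k`. Since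
`η > 1` does not shrink distances, every block is `1`-separated and distinct blocks are `δ` apart;
a point of `[1, ∞)` is within `2` of `P`, because the integer below it is either admitted to its
block or within `1` of `η • B k`. Then `X = {0} ∪ P ∪ -P` lies in `ℤ[η]`, a finitely generated
`ℤ`-module as `η` is integral.
-/

open Set Pointwise

lemma AddSubgroup.closure_fg_of_subset {G : Type*} [AddCommGroup G] {X : Set G}
    {M : Submodule ℤ G} (hM : M.FG) (hX : X ⊆ M) : (AddSubgroup.closure X).FG := by
  rw [← Submodule.span_int_eq_addSubgroupClosure, ← Submodule.fg_iff_addSubgroup_fg]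
  exact hM.of_le (Submodule.span_le.2 hX)

namespace DeloneInflation

section Symmetrize

def symmetrize (P : Set ℝ) : Set ℝ := insert 0 (P ∪ -P)

variable {P : Set ℝ}

lemma mem_symmetrize {x : ℝ} : x ∈ symmetrize P ↔ x = 0 ∨ x ∈ P ∨ -x ∈ P := Iff.rfl

lemma symmetrize_pairwise {r : ℝ} (hP : ∀ x ∈ P, 1 ≤ x) (hr : r ≤ 1)
    (hsep : P.Pairwise fun x y => r ≤ |x - y|) :
    (symmetrize P).Pairwise fun x y => r ≤ |x - y| := by
  rintro x hx y hy hxy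
  rcases mem_symmetrize.1 hx with rfl | hx | hx <;>
    rcases mem_symmetrize.1 hy with rfl | hy | hy
  · exact absurd rfl hxy
  · exact le_abs.2 (Or.inr (by linarith [hP _ hy]))
  · exact le_abs.2 (Or.inl (by linarith [hP _ hy]))
  · exact le_abs.2 (Or.inl (by linarith [hP _ hx]))
  · exact hsep hx hy hxy
  · exact le_abs.2 (Or.inl (by linarith [hP _ hx, hP _ hy]))
  · exact le_abs.2 (Or.inr (by linarith [hP _ hx]))
  · exact le_abs.2 (Or.inr (by linarith [hP _ hx, hP _ hy]))
  · have : r ≤ |-x - -y| := hsep hx hy (neg_injective.ne hxy)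
    rwa [neg_sub_neg, abs_sub_comm] at this

lemma symmetrize_near {R : ℝ} (hR : 1 ≤ R) (hnear : ∀ z, 1 ≤ z → ∃ x ∈ P, |z - x| ≤ R) (z : ℝ) :
    ∃ x ∈ symmetrize P, |z - x| ≤ R := by
  rcases le_or_gt 1 z with hz | hz
  · obtain ⟨x, hx, hzx⟩ := hnear z hz
    exact ⟨x, Or.inr (Or.inl hx), hzx⟩
  rcases le_or_gt z (-1) with hz' | hz'
  · obtain ⟨x, hx, hzx⟩ := hnear (-z) (by linarith)
    refine ⟨-x, Or.inr (Or.inr (neg_mem_neg.2 hx)), ?_⟩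
    rwa [show z - -x = -(-z - x) by ring, abs_neg]
  · exact ⟨0, Or.inl rfl, by rw [sub_zero, abs_le]; constructor <;> linarith⟩

lemma mul_mem_symmetrize {c x : ℝ} (hP : ∀ x ∈ P, c * x ∈ P) (hx : x ∈ symmetrize P) :
    c * x ∈ symmetrize P := by
  rcases hx with rfl | hx | hx
  · exact Or.inl (mul_zero c)
  · exact Or.inr (Or.inl (hP _ hx))
  · exact Or.inr (Or.inr (by simpa using hP _ hx))

lemma symmetrize_subset {S : Type*} [SetLike S ℝ] [NegMemClass S ℝ] [ZeroMemClass S ℝ] {s : S}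
    (hP : P ⊆ s) : symmetrize P ⊆ s := by
  rintro x (rfl | hx | hx)
  · exact zero_mem s
  · exact hP hx
  · simpa using neg_mem (hP hx)

end Symmetrize

variable {η : ℝ}

def gap (η : ℝ) : ℝ := min (η - 1) 1

lemma gap_pos (hη : 1 < η) : 0 < gap η := lt_min (sub_pos.2 hη) one_pos

lemma gap_le_one : gap η ≤ 1 := min_le_right _ _

lemma gap_le_sub_one : gap η ≤ η - 1 := min_le_left _ _

def block (η : ℝ) : ℕ → Set ℝ
  | 0 => {x | x ∈ range ((↑) : ℤ → ℝ) ∧ 1 ≤ x ∧ x ≤ η - gap η}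
  | k + 1 => (η * ·) '' block η k ∪
      {x | x ∈ range ((↑) : ℤ → ℝ) ∧ η ^ (k + 1) ≤ x ∧ x ≤ η ^ (k + 2) - gap η ∧
        ∀ y ∈ block η k, 1 ≤ |x - η * y|}

lemma mul_mem_block {k : ℕ} {x : ℝ} (hx : x ∈ block η k) : η * x ∈ block η (k + 1) :=
  Or.inl ⟨x, hx, rfl⟩

lemma pow_mem_block (hη : 1 < η) : ∀ k, η ^ k ∈ block η k
  | 0 => ⟨⟨1, Int.cast_one⟩, (pow_zero η).ge,
      by rw [pow_zero]; linarith [gap_le_sub_one (η := η)]⟩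
  | k + 1 => by rw [pow_succ']; exact mul_mem_block (pow_mem_block hη k)

lemma block_subset_Icc (hη : 1 < η) : ∀ k, block η k ⊆ Icc (η ^ k) (η ^ (k + 1) - gap η)
  | 0 => fun _ hx => by simpa using And.intro hx.2.1 hx.2.2
  | k + 1 => by
    rintro _ (⟨y, hy, rfl⟩ | hx)
    · obtain ⟨hy₁, hy₂⟩ := block_subset_Icc hη k hy
      have hgap : gap η ≤ η * gap η := le_mul_of_one_le_left (gap_pos hη).le hη.le
      constructor <;> rw [pow_succ'] <;> nlinarith
    · exact ⟨hx.2.1, hx.2.2.1⟩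

lemma one_le_abs_intCast_sub {m n : ℤ} (h : (m : ℝ) ≠ n) : 1 ≤ |(m : ℝ) - n| := by
  exact_mod_cast Int.one_le_abs (sub_ne_zero.2 fun hmn => h (congrArg _ hmn))

lemma block_pairwise (hη : 1 < η) : ∀ k, (block η k).Pairwise fun x y => 1 ≤ |x - y|
  | 0 => by
    rintro _ ⟨⟨m, rfl⟩, -⟩ _ ⟨⟨n, rfl⟩, -⟩ hmn
    exact one_le_abs_intCast_sub hmn
  | k + 1 => by
    rintro _ (⟨x, hx, rfl⟩ | hx) _ (⟨y, hy, rfl⟩ | hy) hxy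
    · rw [← mul_sub, abs_mul, abs_of_pos (by linarith)]
      exact one_le_mul_of_one_le_of_one_le hη.le
        (block_pairwise hη k hx hy fun h => hxy (by rw [h]))
    · rw [abs_sub_comm]; exact hy.2.2.2 x hx
    · exact hx.2.2.2 y hy
    · obtain ⟨⟨m, rfl⟩, -⟩ := hx
      obtain ⟨⟨n, rfl⟩, -⟩ := hy
      exact one_le_abs_intCast_sub hxy

lemma block_subset_adjoin : ∀ k, block η k ⊆ Algebra.adjoin ℤ {η}
  | 0 => by
    rintro _ ⟨⟨m, rfl⟩, -⟩
    exact intCast_mem _ m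
  | k + 1 => by
    rintro _ (⟨y, hy, rfl⟩ | ⟨⟨m, rfl⟩, -⟩)
    · exact mul_mem (Algebra.self_mem_adjoin_singleton ℤ η) (block_subset_adjoin k hy)
    · exact intCast_mem _ m

lemma exists_mem_block_near_intCast (k : ℕ) (m : ℤ) (h₁ : η ^ k ≤ m)
    (h₂ : m ≤ η ^ (k + 1) - gap η) : ∃ x ∈ block η k, |(m : ℝ) - x| < 1 := by
  cases k with
  | zero => exact ⟨m, ⟨⟨m, rfl⟩, by simpa using h₁, by simpa using h₂⟩, by simp⟩
  | succ k =>
    by_cases hnear : ∃ y ∈ block η k, |(m : ℝ) - η * y| < 1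
    · obtain ⟨y, hy, hmy⟩ := hnear
      exact ⟨η * y, mul_mem_block hy, hmy⟩
    · push Not at hnear
      exact ⟨m, Or.inr ⟨⟨m, rfl⟩, h₁, h₂, hnear⟩, by simp⟩

def blocks (η : ℝ) : Set ℝ := ⋃ k, block η k

lemma one_le_of_mem_blocks (hη : 1 < η) : ∀ x ∈ blocks η, 1 ≤ x := by
  rintro x ⟨_, ⟨k, rfl⟩, hx⟩
  exact (one_le_pow₀ hη.le).trans (block_subset_Icc hη k hx).1

lemma add_gap_le_of_mem_block_of_lt (hη : 1 < η) {j k : ℕ} (hjk : j < k) {x y : ℝ}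
    (hx : x ∈ block η j) (hy : y ∈ block η k) : x + gap η ≤ y := by
  have hpow : η ^ (j + 1) ≤ η ^ k := pow_le_pow_right₀ hη.le hjk
  linarith [(block_subset_Icc hη j hx).2, (block_subset_Icc hη k hy).1]

lemma blocks_pairwise (hη : 1 < η) : (blocks η).Pairwise fun x y => gap η ≤ |x - y| := by
  rintro x ⟨_, ⟨j, rfl⟩, hx⟩ y ⟨_, ⟨k, rfl⟩, hy⟩ hxy
  rcases lt_trichotomy j k with hjk | rfl | hkj
  · exact le_abs.2 (Or.inr (by linarith [add_gap_le_of_mem_block_of_lt hη hjk hx hy]))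
  · exact gap_le_one.trans (block_pairwise hη j hx hy hxy)
  · exact le_abs.2 (Or.inl (by linarith [add_gap_le_of_mem_block_of_lt hη hkj hy hx]))

lemma exists_mem_blocks_near (hη : 1 < η) {z : ℝ} (hz : 1 ≤ z) :
    ∃ x ∈ blocks η, |z - x| ≤ 2 := by
  obtain ⟨k, hk₁, hk₂⟩ := exists_nat_pow_near hz hη
  have hfloor₁ := Int.floor_le z
  have hfloor₂ := Int.lt_floor_add_one z
  by_cases hlow : η ^ k ≤ ⌊z⌋
  · by_cases hhigh : ⌊z⌋ ≤ η ^ (k + 1) - gap η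
    · obtain ⟨x, hx, hzx⟩ := exists_mem_block_near_intCast k ⌊z⌋ hlow hhigh
      refine ⟨x, mem_iUnion.2 ⟨k, hx⟩, ?_⟩
      calc |z - x| ≤ |z - ⌊z⌋| + |(⌊z⌋ : ℝ) - x| := abs_sub_le _ _ _
        _ ≤ 2 := by rw [abs_of_nonneg (sub_nonneg.2 hfloor₁)]; linarith
    · refine ⟨η ^ (k + 1), mem_iUnion.2 ⟨k + 1, pow_mem_block hη _⟩, ?_⟩
      rw [abs_le]; constructor <;> linarith [gap_le_one (η := η)]
  · refine ⟨η ^ k, mem_iUnion.2 ⟨k, pow_mem_block hη _⟩, ?_⟩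
    rw [abs_le]; constructor <;> linarith

lemma mul_mem_blocks {x : ℝ} (hx : x ∈ blocks η) : η * x ∈ blocks η := by
  obtain ⟨k, hx⟩ := mem_iUnion.1 hx
  exact mem_iUnion.2 ⟨k + 1, mul_mem_block hx⟩

lemma blocks_subset_adjoin : blocks η ⊆ Algebra.adjoin ℤ {η} :=
  iUnion_subset block_subset_adjoin

end DeloneInflation

open DeloneInflation in
/-- For every real algebraic integer `η > 1` there exists a Delone set `X ⊆ ℝ` with
`X ⊆ ℤ[η]`, whose generated additive subgroup is finitely generated, and with `ηX ⊆ X`. -/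
theorem exists_delone_set_with_inflation (η : ℝ) (hη : 1 < η) (hint : IsIntegral ℤ η) :
    ∃ X : Set ℝ,
      ((∃ r > 0, ∀ x ∈ X, ∀ y ∈ X, x ≠ y → 2 * r ≤ |x - y|) ∧
        (∃ R > 0, ∀ z : ℝ, ∃ x ∈ X, |z - x| ≤ R)) ∧
      (∀ x ∈ X, x ∈ Algebra.adjoin ℤ ({η} : Set ℝ)) ∧
      (AddSubgroup.closure X).FG ∧
      (∀ x ∈ X, η * x ∈ X) := by
  have hsub : symmetrize (blocks η) ⊆ Algebra.adjoin ℤ {η} :=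
    symmetrize_subset blocks_subset_adjoin
  have hsep := symmetrize_pairwise (one_le_of_mem_blocks hη) gap_le_one (blocks_pairwise hη)
  refine ⟨symmetrize (blocks η), ⟨⟨gap η / 2, half_pos (gap_pos hη), ?_⟩, ⟨2, two_pos, ?_⟩⟩,
    hsub, AddSubgroup.closure_fg_of_subset hint.fg_adjoin_singleton hsub,
    fun x hx => mul_mem_symmetrize (fun _ => mul_mem_blocks) hx⟩
  · intro x hx y hy hxy
    rw [mul_div_cancel₀ _ two_ne_zero]
    exact hsep hx hy hxy
  · exact symmetrize_near one_le_two fun z hz => exists_mem_blocks_near hη hz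
end
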